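/- arXiv:1404.0223 — 6 statements merged into one kernel-verified Lean document; each statement's English description precedes it below -/
import Mathlib

section
/- Let f : (t₁, t₂) → ℝ be a C² positive solution of the ODE f·f'' + d·(1 - (f')²) = (d+1)·f·(1 - (f')²)^{3/2} on a bounded interval (t₁, t₂), with d a positive integer. If sup |log f| < ∞ on (t₁, t₂) and |f'(t₀)| < 1 for some t₀ ∈ (t₁, t₂), then sup_{(t₁,t₂)} |f'| < 1. -/
/-!
Where `|f'| < 1` the equation has the first integral `f ^ d / √(1 - f' ^ 2) - f ^ (d + 1)`.
Since `f` is bounded above and away from `0`, fixing the value of this quantity bounds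
`√(1 - f' ^ 2)` below by some `δ > 0`. Hence the set of times where `|f'| < 1` and the first
integral has its value at `t₀` is open and relatively closed in `(t₁, t₂)`, so it is everything.
-/

open Set Real

noncomputable def cmcFirstIntegral (d : ℕ) (x y : ℝ) : ℝ :=
  x ^ d / √(1 - y ^ 2) - x ^ (d + 1)

theorem hasDerivAt_cmcFirstIntegral {d : ℕ} {f : ℝ → ℝ} {t : ℝ}
    (hf : DifferentiableAt ℝ f t) (hf' : DifferentiableAt ℝ (deriv f) t) (hft : f t ≠ 0)
    (hslope : deriv f t ^ 2 < 1)
    (hode : f t * deriv (deriv f) t + d * (1 - deriv f t ^ 2)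
      = (d + 1) * f t * √(1 - deriv f t ^ 2) ^ 3) :
    HasDerivAt (fun s ↦ cmcFirstIntegral d (f s) (deriv f s)) 0 t := by
  have hs : 0 < √(1 - deriv f t ^ 2) := sqrt_pos.2 (by linarith)
  have hs2 : √(1 - deriv f t ^ 2) ^ 2 = 1 - deriv f t ^ 2 := sq_sqrt (by linarith)
  have hpow : (d : ℝ) * f t ^ (d - 1) * f t = d * f t ^ d := by
    rcases Nat.eq_zero_or_pos d with rfl | hd
    · simp
    · rw [mul_assoc, pow_sub_one_mul hd.ne']
  have hroot := ((hf'.hasDerivAt.fun_pow 2).const_sub 1).sqrt (by linarith)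
  have hderiv := ((hf.hasDerivAt.fun_pow d).fun_div hroot hs.ne').fun_sub
    (hf.hasDerivAt.fun_pow (d + 1))
  refine hderiv.congr_deriv ?_
  norm_num only [Nat.add_sub_cancel, Nat.cast_succ, pow_one]
  -- the extra factor `f t` lets `hode` eliminate `f t * f''`, also when `d = 0`
  rw [eq_comm, ← mul_left_inj' (mul_ne_zero hft (pow_ne_zero 3 hs.ne')), zero_mul]
  field_simp
  linear_combination (-(deriv f t * f t ^ d)) * hode
    - (deriv f t * √(1 - deriv f t ^ 2) ^ 2) * hpow - (deriv f t * d * f t ^ d) * hs2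

theorem sq_le_one_sub_of_cmcFirstIntegral_eq {d : ℕ} {a b c x y : ℝ} (ha : 0 < a) (hax : a ≤ x)
    (hxb : x ≤ b) (hy : y ^ 2 < 1) (hc : cmcFirstIntegral d x y = c) :
    y ^ 2 ≤ 1 - (a ^ d / (|c| + b ^ (d + 1))) ^ 2 := by
  have hs : 0 < √(1 - y ^ 2) := sqrt_pos.2 (by linarith)
  have hK : 0 < |c| + b ^ (d + 1) := by positivity [ha.trans_le (hax.trans hxb)]
  have hxd : x ^ d = (c + x ^ (d + 1)) * √(1 - y ^ 2) := by
    rw [← hc, cmcFirstIntegral]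
    field_simp
    ring
  have hδ : a ^ d / (|c| + b ^ (d + 1)) ≤ √(1 - y ^ 2) := by
    rw [div_le_iff₀ hK]
    calc a ^ d ≤ x ^ d := by gcongr
      _ = (c + x ^ (d + 1)) * √(1 - y ^ 2) := hxd
      _ ≤ √(1 - y ^ 2) * (|c| + b ^ (d + 1)) := by
        rw [mul_comm]
        gcongr
        · exact le_abs_self c
        · linarith
  have := pow_le_pow_left₀ (by positivity) hδ 2
  rw [sq_sqrt (by linarith)] at this
  linarith

theorem IsPreconnected.forall_le_of_hasDerivAt_zero {I : Set ℝ} (hIo : IsOpen I)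
    (hI : IsPreconnected I) {g E : ℝ → ℝ} {ε : ℝ} (hg : ContinuousOn g I) (hε : ε < 1)
    (hE : ∀ t ∈ I, g t < 1 → HasDerivAt E 0 t) {t₀ : ℝ} (ht₀ : t₀ ∈ I) (hg₀ : g t₀ < 1)
    (hbound : ∀ t ∈ I, g t < 1 → E t = E t₀ → g t ≤ ε) :
    ∀ t ∈ I, g t ≤ ε := by
  set U := I ∩ g ⁻¹' Iio 1
  have hUo : IsOpen U := hg.isOpen_inter_preimage hIo isOpen_Iio
  have hAo : IsOpen (U ∩ E ⁻¹' {E t₀}) :=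
    hUo.isOpen_inter_preimage_of_deriv_eq_zero
      (fun t ht ↦ (hE t ht.1 ht.2).differentiableAt.differentiableWithinAt)
      (fun t ht ↦ (hE t ht.1 ht.2).deriv) _
  have hclosed : closure (U ∩ E ⁻¹' {E t₀}) ∩ I ⊆ U ∩ E ⁻¹' {E t₀} := by
    rintro t ⟨htA, ht⟩
    have hgt : g t ≤ ε := by
      simpa using (hg.continuousAt (hIo.mem_nhds ht)).continuousWithinAt.mem_closure htA
        (t := Iic ε) fun s hs ↦ hbound s hs.1.1 hs.1.2 hs.2
    have hgt1 : g t < 1 := hgt.trans_lt hε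
    have hEt : E t = E t₀ := by
      simpa using (hE t ht hgt1).continuousAt.continuousWithinAt.mem_closure htA
        (t := {E t₀}) fun s hs ↦ hs.2
    exact ⟨⟨ht, hgt1⟩, hEt⟩
  intro t ht
  have hA := hI.subset_of_closure_inter_subset hAo ⟨t₀, ht₀, ⟨ht₀, hg₀⟩, rfl⟩ hclosed ht
  exact hbound t ht hA.1.2 hA.2

theorem stmt1_general (d : ℕ) (t₁ t₂ t₀ : ℝ) (ht₀ : t₀ ∈ Set.Ioo t₁ t₂)
    (f : ℝ → ℝ)
    (hf : ContDiffOn ℝ 2 f (Set.Ioo t₁ t₂))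
    (hpos : ∀ t ∈ Set.Ioo t₁ t₂, 0 < f t)
    (hode : ∀ t ∈ Set.Ioo t₁ t₂,
      f t * deriv (deriv f) t + (d : ℝ) * (1 - (deriv f t) ^ 2)
        = ((d : ℝ) + 1) * f t * (1 - (deriv f t) ^ 2) ^ ((3 : ℝ) / 2))
    (hlog : ∃ C : ℝ, ∀ t ∈ Set.Ioo t₁ t₂, |Real.log (f t)| ≤ C)
    (hd0 : |deriv f t₀| < 1) :
    ∃ c < (1 : ℝ), ∀ t ∈ Set.Ioo t₁ t₂, |deriv f t| ≤ c := by
  obtain ⟨C, hC⟩ := hlog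
  have hfbounds : ∀ t ∈ Ioo t₁ t₂, exp (-C) ≤ f t ∧ f t ≤ exp C := fun t ht ↦
    ⟨(le_log_iff_exp_le (hpos t ht)).1 (abs_le.1 (hC t ht)).1,
      (log_le_iff_le_exp (hpos t ht)).1 (abs_le.1 (hC t ht)).2⟩
  have hf' : ContDiffOn ℝ 1 (deriv f) (Ioo t₁ t₂) := hf.deriv_of_isOpen isOpen_Ioo (by norm_num)
  have hconserved (t) (ht : t ∈ Ioo t₁ t₂) (hslope : deriv f t ^ 2 < 1) :
      HasDerivAt (fun s ↦ cmcFirstIntegral d (f s) (deriv f s)) 0 t := by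
    refine hasDerivAt_cmcFirstIntegral
      ((hf.differentiableOn (by norm_num)).differentiableAt (isOpen_Ioo.mem_nhds ht))
      ((hf'.differentiableOn one_ne_zero).differentiableAt (isOpen_Ioo.mem_nhds ht))
      (hpos t ht).ne' hslope ?_
    rw [hode t ht, rpow_div_two_eq_sqrt _ (by linarith)]
    norm_cast
  set δ := exp (-C) ^ d / (|cmcFirstIntegral d (f t₀) (deriv f t₀)| + exp C ^ (d + 1))
  have hδ : 0 < δ := by positivity
  have hslope_le := isPreconnected_Ioo.forall_le_of_hasDerivAt_zero isOpen_Ioo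
    (hf'.continuousOn.pow 2) (by nlinarith : 1 - δ ^ 2 < 1) hconserved ht₀
    (sq_lt_one_iff_abs_lt_one _ |>.2 hd0) fun t ht hslope hE ↦
    sq_le_one_sub_of_cmcFirstIntegral_eq (exp_pos _) (hfbounds t ht).1 (hfbounds t ht).2 hslope hE
  refine ⟨√(1 - δ ^ 2), ?_, fun t ht ↦ abs_le_sqrt (hslope_le t ht)⟩
  rw [sqrt_lt' one_pos]
  nlinarith

/-- Blow-up criterion for the spherically symmetric CMC ODE: if `log f` is bounded on a
bounded interval and `|f'| < 1` at one point, then `sup |f'| < 1` on the whole interval. -/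
theorem stmt1 (d : ℕ) (hd : 1 ≤ d) (t₁ t₂ t₀ : ℝ) (ht₀ : t₀ ∈ Set.Ioo t₁ t₂)
    (f : ℝ → ℝ)
    (hf : ContDiffOn ℝ 2 f (Set.Ioo t₁ t₂))
    (hpos : ∀ t ∈ Set.Ioo t₁ t₂, 0 < f t)
    (hode : ∀ t ∈ Set.Ioo t₁ t₂,
      f t * deriv (deriv f) t + (d : ℝ) * (1 - (deriv f t) ^ 2)
        = ((d : ℝ) + 1) * f t * (1 - (deriv f t) ^ 2) ^ ((3 : ℝ) / 2))
    (hlog : ∃ C : ℝ, ∀ t ∈ Set.Ioo t₁ t₂, |Real.log (f t)| ≤ C)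
    (hd0 : |deriv f t₀| < 1) :
    ∃ c < (1 : ℝ), ∀ t ∈ Set.Ioo t₁ t₂, |deriv f t| ≤ c :=
  stmt1_general d t₁ t₂ t₀ ht₀ f hf hpos hode hlog hd0
end

section
/- Let f be a C² solution of f·f'' + d·(1 - (f')²) = (d+1)·f·(1 - (f')²)^{3/2} with f(t₀) > d/(d+1), |f'(t₀)| < 1 and f'(t₀) ≥ 0. Then f extends to a solution on [t₀, ∞) with 0 ≤ f' < 1 throughout, and f(t) → ∞ as t → ∞. -/
/-!
Along a solution with `|f'| < 1` the quantity `E = f^d / √(1 - f'^2) - f^(d+1)` is conserved.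
At a zero of `f'` the equation reduces to `f f'' = (d + 1) f - d`, which is positive while
`f > d / (d + 1)`; so `f'` cannot become negative and `f` keeps increasing. Conservation of `E`
also keeps `f'` away from `1`: in the form `√(1 - f'^2) (f^(d+1) + E) = f^d` it would force `f = 0`.
Hence `f` solves the autonomous equation `f' = G(f)` with `G(y) = √(1 - (y^d / (y^(d+1) + E))^2)`,
and `0 < G < 1` above `f(t₁)` once `f'(t₁) > 0`. The solution of `f' = G(f)` is the inverse of
`t = t₁ + ∫ dy / G(y)`; since `G < 1` this time map grows at least linearly, so the inverse is
defined for all `t ≥ t₁`, tends to infinity, and coincides with `f` by uniqueness.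
-/

open Set Filter Topology

-- Also valid for `d = 0`, where `d - 1` truncates to `0`.
lemma natCast_mul_pow_pred_mul (d : ℕ) (x : ℝ) : (d : ℝ) * x ^ (d - 1) * x = d * x ^ d := by
  cases d with
  | zero => simp
  | succ k => rw [Nat.add_sub_cancel, mul_assoc, ← pow_succ]

lemma rpow_three_halves {x : ℝ} (hx : 0 ≤ x) : x ^ ((3 : ℝ) / 2) = √x ^ 3 := by
  rw [Real.sqrt_eq_rpow, ← Real.rpow_natCast, ← Real.rpow_mul hx]
  norm_num

lemma eventually_nhdsGT_lt_of_hasDerivAt {g : ℝ → ℝ} {g' x : ℝ} (hg : HasDerivAt g g' x)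
    (hg' : 0 < g') : ∀ᶠ s in 𝓝[>] x, g x < g s := by
  have hslope : ∀ᶠ s in 𝓝[>] x, 0 < slope g x s :=
    ((hasDerivAt_iff_tendsto_slope.1 hg).eventually (lt_mem_nhds hg')).filter_mono
      (nhdsWithin_mono _ fun s hs => ne_of_gt hs)
  filter_upwards [hslope, self_mem_nhdsWithin] with s hs hxs
  rw [slope_def_field] at hs
  exact sub_pos.1 ((div_pos_iff_of_pos_right (sub_pos.2 hxs)).1 hs)

lemma eventually_nhdsGT_lt_of_deriv_pos {g : ℝ → ℝ} {x : ℝ}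
    (hc : ∀ᶠ s in 𝓝[≥] x, ContinuousAt g s) (hg : ∀ᶠ s in 𝓝[>] x, 0 < deriv g s) :
    ∀ᶠ s in 𝓝[>] x, g x < g s := by
  obtain ⟨u, hxu, hcu⟩ := mem_nhdsGE_iff_exists_Ico_subset.1 hc
  obtain ⟨u', hxu', hgu'⟩ := mem_nhdsGT_iff_exists_Ioo_subset.1 hg
  have hmono : StrictMonoOn g (Ico x (min u u')) := by
    refine strictMonoOn_of_deriv_pos (convex_Ico x _)
      (fun s hs => (hcu ⟨hs.1, hs.2.trans_le (min_le_left _ _)⟩).continuousWithinAt)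
      fun s hs => ?_
    rw [interior_Ico] at hs
    exact hgu' ⟨hs.1, hs.2.trans_le (min_le_right _ _)⟩
  filter_upwards [Ioo_mem_nhdsGT (lt_min hxu hxu')] with s hs
  exact hmono (left_mem_Ico.2 (lt_min hxu hxu')) (Ioo_subset_Ico_self hs) hs.1

lemma eventually_nhdsGT_eq_of_hasDerivAt_zero {g : ℝ → ℝ} {x : ℝ}
    (hg : ∀ᶠ s in 𝓝[≥] x, HasDerivAt g 0 s) : ∀ᶠ s in 𝓝[>] x, g s = g x := by
  obtain ⟨u, hxu, hsub⟩ := mem_nhdsGE_iff_exists_Ico_subset.1 hg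
  filter_upwards [Ioo_mem_nhdsGT hxu] with s hs
  have hIcc : Icc x s ⊆ Ico x u := Icc_subset_Ico_right hs.2
  exact constant_of_has_deriv_right_zero
    (fun z hz => (hsub (hIcc hz)).continuousAt.continuousWithinAt)
    (fun z hz => (hsub (hIcc (Ico_subset_Icc_self hz))).hasDerivWithinAt) s
    (right_mem_Icc.2 hs.1.le)

lemma deriv_deriv_eq_of_eventually_hasDerivAt {Φ G : ℝ → ℝ} {t : ℝ}
    (hΦ : ∀ᶠ s in 𝓝 t, HasDerivAt Φ (G (Φ s)) s) (hG : DifferentiableAt ℝ G (Φ t)) :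
    deriv (deriv Φ) t = deriv G (Φ t) * G (Φ t) := by
  have hderiv : deriv Φ =ᶠ[𝓝 t] G ∘ Φ := hΦ.mono fun s hs => hs.deriv
  rw [hderiv.deriv_eq, deriv_comp t hG hΦ.self_of_nhds.differentiableAt,
    hΦ.self_of_nhds.deriv]

lemma contDiffOn_succ_of_hasDerivAt_comp {Φ G : ℝ → ℝ} {U V : Set ℝ} {n : ℕ} (hU : IsOpen U)
    (hmaps : MapsTo Φ U V) (hΦ : ∀ t ∈ U, HasDerivAt Φ (G (Φ t)) t) (hG : ContDiffOn ℝ n G V) :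
    ContDiffOn ℝ (n + 1) Φ U := by
  have hdiff : DifferentiableOn ℝ Φ U := fun t ht =>
    (hΦ t ht).differentiableAt.differentiableWithinAt
  have step : ∀ {n : ℕ}, ContDiffOn ℝ n G V → ContDiffOn ℝ n Φ U → ContDiffOn ℝ (n + 1) Φ U :=
    fun hG hΦn => (contDiffOn_succ_iff_deriv_of_isOpen hU).2
      ⟨hdiff, by simp, (hG.comp hΦn hmaps).congr fun t ht => (hΦ t ht).deriv⟩
  induction n with
  | zero => exact step hG (contDiffOn_zero.2 hdiff.continuousOn)
  | succ k ih => exact step hG (by exact_mod_cast ih (hG.of_le (by norm_cast; omega)))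

section AutonomousFlow

variable {G : ℝ → ℝ} {l M y₁ t₁ : ℝ}

noncomputable def timeMap (G : ℝ → ℝ) (y₁ t₁ y : ℝ) : ℝ := t₁ + ∫ u in y₁..y, (G u)⁻¹

/-- The solution of `y' = G y` through `(t₁, y₁)`: it inverts `t = t₁ + ∫_{y₁}^{y} du / G u`. -/
noncomputable def autonomousFlow (G : ℝ → ℝ) (l y₁ t₁ t : ℝ) : ℝ :=
  Function.invFunOn (timeMap G y₁ t₁) (Ioi l) t

@[simp]
lemma timeMap_self : timeMap G y₁ t₁ y₁ = t₁ := by simp [timeMap]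

variable (hG : ContinuousOn G (Ioi l)) (hG0 : ∀ y ∈ Ioi l, 0 < G y) (hy₁ : y₁ ∈ Ioi l)
include hG hG0 hy₁

lemma hasDerivAt_timeMap {y : ℝ} (hy : y ∈ Ioi l) : HasDerivAt (timeMap G y₁ t₁) (G y)⁻¹ y := by
  have hinv : ContinuousOn (fun u => (G u)⁻¹) (Ioi l) := hG.inv₀ fun u hu => (hG0 u hu).ne'
  exact (intervalIntegral.integral_hasDerivAt_right
    (hinv.mono ((convex_Ioi l).ordConnected.uIcc_subset hy₁ hy)).intervalIntegrable
    (hinv.stronglyMeasurableAtFilter isOpen_Ioi y hy)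
    (hinv.continuousAt (isOpen_Ioi.mem_nhds hy))).const_add t₁

lemma strictMonoOn_timeMap : StrictMonoOn (timeMap G y₁ t₁) (Ioi l) := by
  refine strictMonoOn_of_deriv_pos (convex_Ioi l)
    (fun y hy => (hasDerivAt_timeMap hG hG0 hy₁ hy).continuousAt.continuousWithinAt)
    fun y hy => ?_
  rw [interior_Ioi] at hy
  rw [(hasDerivAt_timeMap hG hG0 hy₁ hy).deriv]
  exact inv_pos.2 (hG0 y hy)

variable (hGM : ∀ y ∈ Ioi l, G y ≤ M)
include hGM

lemma monotoneOn_mul_timeMap_sub : MonotoneOn (fun y => M * timeMap G y₁ t₁ y - y) (Ioi l) := by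
  have hderiv : ∀ y ∈ Ioi l, HasDerivAt (fun y => M * timeMap G y₁ t₁ y - y) (M / G y - 1) y :=
    fun y hy => ((hasDerivAt_timeMap hG hG0 hy₁ hy).const_mul M).sub (hasDerivAt_id y)
  refine monotoneOn_of_deriv_nonneg (convex_Ioi l)
    (fun y hy => (hderiv y hy).continuousAt.continuousWithinAt)
    (fun y hy => (hderiv y (interior_subset hy)).differentiableAt.differentiableWithinAt)
    fun y hy => ?_
  rw [interior_Ioi] at hy
  rw [(hderiv y hy).deriv, sub_nonneg, one_le_div (hG0 y hy)]
  exact hGM y hy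

lemma exists_timeMap_eq {t : ℝ} (ht : t₁ ≤ t) : ∃ y ∈ Ioi l, timeMap G y₁ t₁ y = t := by
  have hM : 0 < M := (hG0 y₁ hy₁).trans_le (hGM y₁ hy₁)
  set Y := y₁ + M * (t - t₁)
  have hy₁Y : y₁ ≤ Y := le_add_of_nonneg_right (mul_nonneg hM.le (sub_nonneg.2 ht))
  have hIcc : Icc y₁ Y ⊆ Ioi l := fun y hy => lt_of_lt_of_le hy₁ hy.1
  have htY : t ≤ timeMap G y₁ t₁ Y := by
    have := monotoneOn_mul_timeMap_sub (t₁ := t₁) hG hG0 hy₁ hGM hy₁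
      (hIcc (right_mem_Icc.2 hy₁Y)) hy₁Y
    simp only [timeMap_self, Y] at this
    nlinarith
  obtain ⟨y, hy, hyt⟩ := intermediate_value_Icc hy₁Y
    (fun y hy => (hasDerivAt_timeMap hG hG0 hy₁ (hIcc hy)).continuousAt.continuousWithinAt)
    ⟨by simpa using ht, htY⟩
  exact ⟨y, hIcc hy, hyt⟩

lemma autonomousFlow_mem_and_timeMap {t : ℝ} (ht : t₁ ≤ t) :
    autonomousFlow G l y₁ t₁ t ∈ Ioi l ∧ timeMap G y₁ t₁ (autonomousFlow G l y₁ t₁ t) = t :=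
  have h := exists_timeMap_eq hG hG0 hy₁ hGM ht
  ⟨Function.invFunOn_mem h, Function.invFunOn_eq h⟩

lemma autonomousFlow_eq_of_timeMap_eq {t y : ℝ} (ht : t₁ ≤ t) (hy : y ∈ Ioi l)
    (hyt : timeMap G y₁ t₁ y = t) : autonomousFlow G l y₁ t₁ t = y :=
  have h := autonomousFlow_mem_and_timeMap hG hG0 hy₁ hGM ht
  (strictMonoOn_timeMap hG hG0 hy₁).injOn h.1 hy (h.2.trans hyt.symm)

lemma monotoneOn_autonomousFlow : MonotoneOn (autonomousFlow G l y₁ t₁) (Ici t₁) :=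
  fun s hs t ht hst => by
    have h (t : ℝ) (ht : t₁ ≤ t) := autonomousFlow_mem_and_timeMap hG hG0 hy₁ hGM ht
    rwa [← (strictMonoOn_timeMap hG hG0 hy₁).le_iff_le (h s hs).1 (h t ht).1, (h s hs).2,
      (h t ht).2]

lemma image_autonomousFlow_Ioi : autonomousFlow G l y₁ t₁ '' Ioi t₁ = Ioi y₁ := by
  have hT := strictMonoOn_timeMap (t₁ := t₁) hG hG0 hy₁
  ext y
  constructor
  · rintro ⟨t, ht, rfl⟩
    have h := autonomousFlow_mem_and_timeMap hG hG0 hy₁ hGM (le_of_lt ht)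
    rw [mem_Ioi, ← hT.lt_iff_lt hy₁ h.1, h.2, timeMap_self]
    exact ht
  · intro hy
    have hyl : y ∈ Ioi l := show l < y from lt_trans hy₁ hy
    have ht : t₁ < timeMap G y₁ t₁ y := by simpa using hT hy₁ hyl hy
    exact ⟨_, ht, autonomousFlow_eq_of_timeMap_eq hG hG0 hy₁ hGM ht.le hyl rfl⟩

lemma hasDerivAt_autonomousFlow {t : ℝ} (ht : t₁ < t) :
    HasDerivAt (autonomousFlow G l y₁ t₁) (G (autonomousFlow G l y₁ t₁ t)) t := by
  have h (t : ℝ) (ht : t₁ ≤ t) := autonomousFlow_mem_and_timeMap hG hG0 hy₁ hGM ht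
  have himage := image_autonomousFlow_Ioi (t₁ := t₁) hG hG0 hy₁ hGM
  have hcont : ContinuousAt (autonomousFlow G l y₁ t₁) t := by
    refine continuousAt_of_monotoneOn_of_image_mem_nhds
      ((monotoneOn_autonomousFlow hG hG0 hy₁ hGM).mono Ioi_subset_Ici_self) (Ioi_mem_nhds ht) ?_
    rw [himage]
    refine Ioi_mem_nhds ?_
    rw [← mem_Ioi, ← himage]
    exact mem_image_of_mem _ ht
  have hleft : ∀ᶠ s in 𝓝 t, timeMap G y₁ t₁ (autonomousFlow G l y₁ t₁ s) = s :=
    eventually_of_mem (Ioi_mem_nhds ht) fun s hs => (h s (le_of_lt hs)).2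
  simpa using HasDerivAt.of_local_left_inverse hcont
    (hasDerivAt_timeMap hG hG0 hy₁ (h t ht.le).1) (inv_ne_zero (hG0 _ (h t ht.le).1).ne') hleft

lemma tendsto_autonomousFlow_atTop : Tendsto (autonomousFlow G l y₁ t₁) atTop atTop := by
  have h (t : ℝ) (ht : t₁ ≤ t) := autonomousFlow_mem_and_timeMap hG hG0 hy₁ hGM ht
  refine tendsto_atTop.2 fun y => ?_
  have hY : max y y₁ ∈ Ioi l := show l < max y y₁ from lt_max_of_lt_right hy₁
  filter_upwards [eventually_ge_atTop (max (timeMap G y₁ t₁ (max y y₁)) t₁)] with t ht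
  have ht₁ : t₁ ≤ t := le_of_max_le_right ht
  refine le_trans (le_max_left y y₁) ?_
  rw [← (strictMonoOn_timeMap hG hG0 hy₁).le_iff_le hY (h t ht₁).1, (h t ht₁).2]
  exact le_of_max_le_left ht

lemma eq_autonomousFlow_of_hasDerivAt {f : ℝ → ℝ} {c : ℝ}
    (hf : ∀ t ∈ Ico t₁ c, f t ∈ Ioi l ∧ HasDerivAt f (G (f t)) t) (hf₁ : f t₁ = y₁) :
    ∀ t ∈ Ico t₁ c, f t = autonomousFlow G l y₁ t₁ t := by
  intro t ht
  have hderiv : ∀ s ∈ Icc t₁ t, HasDerivAt (fun s => timeMap G y₁ t₁ (f s) - s) 0 s := by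
    intro s hs
    have hs' := hf s ⟨hs.1, hs.2.trans_lt ht.2⟩
    refine (((hasDerivAt_timeMap hG hG0 hy₁ hs'.1).comp s hs'.2).sub
      (hasDerivAt_id s)).congr_deriv ?_
    rw [inv_mul_cancel₀ (hG0 _ hs'.1).ne', sub_self]
  have hconst := constant_of_has_deriv_right_zero
    (fun s hs => (hderiv s hs).continuousAt.continuousWithinAt)
    (fun s hs => (hderiv s (Ico_subset_Icc_self hs)).hasDerivWithinAt) t (right_mem_Icc.2 ht.1)
  simp only [hf₁, timeMap_self, sub_self, sub_eq_zero] at hconst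
  exact (autonomousFlow_eq_of_timeMap_eq hG hG0 hy₁ hGM ht.1 (hf t ht).1 hconst).symm

end AutonomousFlow

lemma contDiffOn_autonomousFlow {G : ℝ → ℝ} {l M y₁ t₁ : ℝ} {n : ℕ}
    (hG : ContDiffOn ℝ n G (Ioi l)) (hG0 : ∀ y ∈ Ioi l, 0 < G y) (hy₁ : y₁ ∈ Ioi l)
    (hGM : ∀ y ∈ Ioi l, G y ≤ M) : ContDiffOn ℝ (n + 1) (autonomousFlow G l y₁ t₁) (Ioi t₁) :=
  contDiffOn_succ_of_hasDerivAt_comp isOpen_Ioi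
    (fun _ ht => (autonomousFlow_mem_and_timeMap hG.continuousOn hG0 hy₁ hGM (le_of_lt ht)).1)
    (fun _ ht => hasDerivAt_autonomousFlow hG.continuousOn hG0 hy₁ hGM ht) hG

def SolvesCMCAt (d : ℕ) (f : ℝ → ℝ) (t : ℝ) : Prop :=
  f t * deriv (deriv f) t + (d : ℝ) * (1 - (deriv f t) ^ 2)
    = ((d : ℝ) + 1) * f t * (1 - (deriv f t) ^ 2) ^ ((3 : ℝ) / 2)

structure IsExpandingCMCSolutionAt (d : ℕ) (f : ℝ → ℝ) (t : ℝ) : Prop where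
  contDiffAt : ContDiffAt ℝ 2 f t
  pos : 0 < f t
  solves : SolvesCMCAt d f t
  deriv_nonneg : 0 ≤ deriv f t
  deriv_lt_one : deriv f t < 1

lemma IsExpandingCMCSolutionAt.congr_of_eventuallyEq {d : ℕ} {f g : ℝ → ℝ} {t : ℝ}
    (hg : IsExpandingCMCSolutionAt d g t) (hfg : f =ᶠ[𝓝 t] g) :
    IsExpandingCMCSolutionAt d f t := by
  have h0 : f t = g t := hfg.self_of_nhds
  have h1 : deriv f t = deriv g t := hfg.deriv_eq
  have h2 : deriv (deriv f) t = deriv (deriv g) t := hfg.deriv.deriv_eq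
  refine ⟨hg.contDiffAt.congr_of_eventuallyEq hfg, h0 ▸ hg.pos, ?_, h1 ▸ hg.deriv_nonneg,
    h1 ▸ hg.deriv_lt_one⟩
  unfold SolvesCMCAt
  rw [h0, h1, h2]
  exact hg.solves

lemma deriv_deriv_pos_of_deriv_eq_zero {d : ℕ} {f : ℝ → ℝ} {t : ℝ} (hode : SolvesCMCAt d f t)
    (hft : d / (d + 1) < f t) (h0 : deriv f t = 0) : 0 < deriv (deriv f) t := by
  unfold SolvesCMCAt at hode
  rw [h0, zero_pow two_ne_zero, sub_zero, Real.one_rpow, mul_one, mul_one] at hode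
  have hpos : 0 < f t := lt_of_le_of_lt (by positivity) hft
  rw [div_lt_iff₀ (by positivity)] at hft
  nlinarith

lemma eventually_deriv_pos_nhdsGT {d : ℕ} {f : ℝ → ℝ} {t : ℝ} (hf : ContDiffAt ℝ 2 f t)
    (hode : SolvesCMCAt d f t) (hft : d / (d + 1) < f t) (hv : 0 ≤ deriv f t) :
    ∀ᶠ s in 𝓝[>] t, 0 < deriv f s := by
  have hf' : ContDiffAt ℝ 1 (deriv f) t := hf.derivWithin (by norm_num)
  rcases hv.eq_or_lt with h0 | hpos
  · have h := eventually_nhdsGT_lt_of_hasDerivAt (hf'.differentiableAt (by norm_num)).hasDerivAt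
      (deriv_deriv_pos_of_deriv_eq_zero hode hft h0.symm)
    rwa [← h0] at h
  · exact (hf'.continuousAt.eventually (lt_mem_nhds hpos)).filter_mono nhdsWithin_le_nhds

noncomputable def cmcEnergy (d : ℕ) (y v : ℝ) : ℝ := y ^ d / √(1 - v ^ 2) - y ^ (d + 1)

lemma cmcEnergy_eq_iff {d : ℕ} {y v E : ℝ} (hv : v ^ 2 < 1) :
    cmcEnergy d y v = E ↔ √(1 - v ^ 2) * (y ^ (d + 1) + E) = y ^ d := by
  have hσ : 0 < √(1 - v ^ 2) := Real.sqrt_pos.2 (by linarith)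
  rw [cmcEnergy, sub_eq_iff_eq_add, div_eq_iff hσ.ne']
  constructor <;> intro h <;> linarith

lemma hasDerivAt_cmcEnergy {d : ℕ} {f : ℝ → ℝ} {t : ℝ} (hf : ContDiffAt ℝ 2 f t)
    (hpos : 0 < f t) (hv : deriv f t ^ 2 < 1) (hode : SolvesCMCAt d f t) :
    HasDerivAt (fun s => cmcEnergy d (f s) (deriv f s)) 0 t := by
  have h1 : HasDerivAt f (deriv f t) t := (hf.differentiableAt (by norm_num)).hasDerivAt
  have h2 : HasDerivAt (deriv f) (deriv (deriv f) t) t :=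
    ((hf.derivWithin (m := 1) (by norm_num)).differentiableAt (by norm_num)).hasDerivAt
  have hsqrt := ((h2.fun_pow 2).const_sub 1).sqrt (by linarith)
  refine (((h1.fun_pow d).div hsqrt (Real.sqrt_pos.2 (by linarith)).ne').sub
    (h1.fun_pow (d + 1))).congr_deriv ?_
  unfold SolvesCMCAt at hode
  rw [rpow_three_halves (by linarith)] at hode
  have hσ2 : √(1 - deriv f t ^ 2) ^ 2 = 1 - deriv f t ^ 2 := Real.sq_sqrt (by linarith)
  have hσ : 0 < √(1 - deriv f t ^ 2) := Real.sqrt_pos.2 (by linarith)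
  generalize √(1 - deriv f t ^ 2) = σ at hσ hσ2 hode ⊢
  generalize deriv (deriv f) t = w at hode ⊢
  generalize deriv f t = v at hσ2 hode ⊢
  generalize f t = y at hpos hode ⊢
  rw [Nat.add_sub_cancel, ← hσ2] at *
  have hpow : (d : ℝ) * y ^ (d - 1) = d * y ^ d / y := by
    rw [eq_div_iff hpos.ne', natCast_mul_pow_pred_mul]
  rw [hpow]
  field_simp
  push_cast
  linear_combination (2 * y ^ d * v) * hode

lemma sq_lt_one_of_sqrt_mul_eq {d : ℕ} {y v E : ℝ} (hy : 0 < y)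
    (h : √(1 - v ^ 2) * (y ^ (d + 1) + E) = y ^ d) : v ^ 2 < 1 := by
  by_contra hv
  rw [Real.sqrt_eq_zero'.2 (by linarith), zero_mul] at h
  exact (pow_pos hy d).ne h

/-- The condition `cmcEnergy d y v = E` is written in product form: this keeps the region
closed, and inside it `y > 0` forces `v ^ 2 < 1`. -/
def CMCInvariant (d : ℕ) (y₀ E y v : ℝ) : Prop :=
  0 ≤ v ∧ y₀ ≤ y ∧ √(1 - v ^ 2) * (y ^ (d + 1) + E) = y ^ d

lemma isClosed_setOf_cmcInvariant (d : ℕ) (y₀ E : ℝ) :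
    IsClosed {p : ℝ × ℝ | CMCInvariant d y₀ E p.1 p.2} :=
  (isClosed_le continuous_const continuous_snd).inter
    ((isClosed_le continuous_const continuous_fst).inter (isClosed_eq (by fun_prop) (by fun_prop)))

lemma CMCInvariant.deriv_lt_one {d : ℕ} {y₀ E y v : ℝ} (h : CMCInvariant d y₀ E y v)
    (hy : 0 < y) : v < 1 :=
  (le_abs_self v).trans_lt ((sq_lt_one_iff_abs_lt_one v).1 (sq_lt_one_of_sqrt_mul_eq hy h.2.2))

lemma eventually_nhdsGT_cmcInvariant {d : ℕ} {f : ℝ → ℝ} {t₀ b E y : ℝ}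
    (hf : ∀ t ∈ Ico t₀ b, ContDiffAt ℝ 2 f t) (hpos : ∀ t ∈ Ico t₀ b, 0 < f t)
    (hode : ∀ t ∈ Ico t₀ b, SolvesCMCAt d f t) (hinit : d / (d + 1) < f t₀) (hy : y ∈ Ico t₀ b)
    (hinv : CMCInvariant d (f t₀) E (f y) (deriv f y)) :
    ∀ᶠ z in 𝓝[>] y, CMCInvariant d (f t₀) E (f z) (deriv f z) := by
  obtain ⟨hv0, hfy, hE⟩ := hinv
  have hv1 : deriv f y ^ 2 < 1 := sq_lt_one_of_sqrt_mul_eq (hpos y hy) hE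
  have hnear : ∀ᶠ z in 𝓝[≥] y, z ∈ Ico t₀ b :=
    mem_of_superset (Ico_mem_nhdsGE hy.2) (Ico_subset_Ico_left hy.1)
  have hv1near : ∀ᶠ z in 𝓝[≥] y, deriv f z ^ 2 < 1 :=
    ((((hf y hy).derivWithin (m := 1) (by norm_num)).continuousAt.pow 2).eventually
      (eventually_lt_nhds hv1)).filter_mono nhdsWithin_le_nhds
  have henergy : ∀ᶠ z in 𝓝[>] y,
      cmcEnergy d (f z) (deriv f z) = cmcEnergy d (f y) (deriv f y) :=
    eventually_nhdsGT_eq_of_hasDerivAt_zero ((hnear.and hv1near).mono fun z hz =>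
      hasDerivAt_cmcEnergy (hf z hz.1) (hpos z hz.1) hz.2 (hode z hz.1))
  have hderiv : ∀ᶠ z in 𝓝[>] y, 0 < deriv f z :=
    eventually_deriv_pos_nhdsGT (hf y hy) (hode y hy) (hinit.trans_le hfy) hv0
  have hincr : ∀ᶠ z in 𝓝[>] y, f y < f z :=
    eventually_nhdsGT_lt_of_deriv_pos (hnear.mono fun z hz => (hf z hz).continuousAt) hderiv
  filter_upwards [henergy, hderiv, hincr,
    hv1near.filter_mono (nhdsWithin_mono _ Ioi_subset_Ici_self)] with z hEz hz hfz hz1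
  exact ⟨hz.le, hfy.trans hfz.le,
    (cmcEnergy_eq_iff hz1).1 (hEz.trans ((cmcEnergy_eq_iff hv1).2 hE))⟩

lemma cmcInvariant_of_mem_Ico {d : ℕ} {f : ℝ → ℝ} {t₀ b : ℝ}
    (hf : ∀ t ∈ Ico t₀ b, ContDiffAt ℝ 2 f t) (hpos : ∀ t ∈ Ico t₀ b, 0 < f t)
    (hode : ∀ t ∈ Ico t₀ b, SolvesCMCAt d f t) (hinit : d / (d + 1) < f t₀)
    (hv0 : 0 ≤ deriv f t₀) (hv1 : deriv f t₀ ^ 2 < 1) {t : ℝ} (ht : t ∈ Ico t₀ b) :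
    CMCInvariant d (f t₀) (cmcEnergy d (f t₀) (deriv f t₀)) (f t) (deriv f t) := by
  have hIcc : Icc t₀ t ⊆ Ico t₀ b := Icc_subset_Ico_right ht.2
  have hcl : IsClosed ((fun s => (f s, deriv f s)) ⁻¹'
      {p | CMCInvariant d (f t₀) (cmcEnergy d (f t₀) (deriv f t₀)) p.1 p.2} ∩ Icc t₀ t) := by
    rw [inter_comm]
    refine ContinuousOn.preimage_isClosed_of_isClosed (fun s hs => ?_) isClosed_Icc
      (isClosed_setOf_cmcInvariant _ _ _)
    have hs := hf s (hIcc hs)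
    exact (hs.continuousAt.prodMk
      (hs.derivWithin (m := 1) (by norm_num)).continuousAt).continuousWithinAt
  refine hcl.Icc_subset_of_forall_mem_nhdsWithin ⟨hv0, le_rfl, (cmcEnergy_eq_iff hv1).1 rfl⟩
    (fun s hs => eventually_nhdsGT_cmcInvariant hf hpos hode hinit
      (hIcc (Ico_subset_Icc_self hs.2)) hs.1) (right_mem_Icc.2 ht.1)

-- The nonnegative root `v` of `cmcEnergy d y v = E`.
noncomputable def cmcSpeed (d : ℕ) (E y : ℝ) : ℝ := √(1 - (y ^ d / (y ^ (d + 1) + E)) ^ 2)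

def cmcSpeedDomain (d : ℕ) (E : ℝ) : Set ℝ := {y | 0 < y ∧ y ^ d < y ^ (d + 1) + E}

lemma eq_cmcSpeed_of_sqrt_mul_eq {d : ℕ} {y v E : ℝ} (hy : 0 < y) (hv : 0 ≤ v)
    (h : √(1 - v ^ 2) * (y ^ (d + 1) + E) = y ^ d) : v = cmcSpeed d E y := by
  have hQ : y ^ (d + 1) + E ≠ 0 := by
    rintro hQ
    rw [hQ, mul_zero] at h
    exact (pow_pos hy d).ne' h.symm
  have hσ : y ^ d / (y ^ (d + 1) + E) = √(1 - v ^ 2) := by rw [div_eq_iff hQ, h]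
  rw [cmcSpeed, hσ, Real.sq_sqrt (by linarith [sq_lt_one_of_sqrt_mul_eq hy h]), sub_sub_cancel,
    Real.sqrt_sq hv]

lemma cmcSpeed_mem_Ioo {d : ℕ} {E y : ℝ} (hy : y ∈ cmcSpeedDomain d E) :
    cmcSpeed d E y ∈ Ioo 0 1 := by
  obtain ⟨hy, hgap⟩ := hy
  have hm : 0 < y ^ d / (y ^ (d + 1) + E) := div_pos (pow_pos hy d) ((pow_pos hy d).trans hgap)
  have hm1 : y ^ d / (y ^ (d + 1) + E) < 1 := (div_lt_one ((pow_pos hy d).trans hgap)).2 hgap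
  exact ⟨Real.sqrt_pos.2 (by nlinarith), (Real.sqrt_lt' one_pos).2 (by nlinarith)⟩

lemma contDiffAt_cmcSpeed {d : ℕ} {E y : ℝ} {n : WithTop ℕ∞} (hy : y ∈ cmcSpeedDomain d E) :
    ContDiffAt ℝ n (cmcSpeed d E) y := by
  have hQ : y ^ (d + 1) + E ≠ 0 := ((pow_pos hy.1 d).trans hy.2).ne'
  have hr : 1 - (y ^ d / (y ^ (d + 1) + E)) ^ 2 ≠ 0 :=
    (Real.sqrt_pos.1 (cmcSpeed_mem_Ioo hy).1).ne'
  unfold cmcSpeed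
  fun_prop (disch := assumption)

lemma cmcSpeed_ode {d : ℕ} {E y : ℝ} (hdom : y ∈ cmcSpeedDomain d E) :
    y * (deriv (cmcSpeed d E) y * cmcSpeed d E y) + d * (1 - cmcSpeed d E y ^ 2)
      = (d + 1) * y * (1 - cmcSpeed d E y ^ 2) ^ ((3 : ℝ) / 2) := by
  have hr := Real.sqrt_pos.1 (cmcSpeed_mem_Ioo hdom).1
  obtain ⟨hy, hgap⟩ := hdom
  have hQ : 0 < y ^ (d + 1) + E := (pow_pos hy d).trans hgap
  have hm : HasDerivAt (fun z => z ^ d / (z ^ (d + 1) + E))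
      ((d * y ^ (d - 1) * (y ^ (d + 1) + E) - y ^ d * ((d + 1 : ℕ) * y ^ d)) /
        (y ^ (d + 1) + E) ^ 2) y :=
    (hasDerivAt_pow d y).div ((hasDerivAt_pow (d + 1) y).add_const E) hQ.ne'
  have hG : HasDerivAt (cmcSpeed d E) _ y := ((hm.fun_pow 2).const_sub 1).sqrt hr.ne'
  have hG2 : cmcSpeed d E y ^ 2 = 1 - (y ^ d / (y ^ (d + 1) + E)) ^ 2 := Real.sq_sqrt hr.le
  rw [hG.deriv, hG2, sub_sub_cancel, rpow_three_halves (sq_nonneg _),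
    Real.sqrt_sq (div_pos (pow_pos hy d) hQ).le, cmcSpeed]
  have hpow : (d : ℝ) * y ^ (d - 1) = d * y ^ d / y := by
    rw [eq_div_iff hy.ne', natCast_mul_pow_pred_mul]
  have hσ : √(1 - (y ^ d / (y ^ (d + 1) + E)) ^ 2) ≠ 0 := (Real.sqrt_pos.2 hr).ne'
  generalize √(1 - (y ^ d / (y ^ (d + 1) + E)) ^ 2) = σ at hσ ⊢
  have hQ' := hQ.ne'
  generalize y ^ (d + 1) + E = Q at hQ' ⊢
  rw [hpow]
  push_cast
  field_simp
  ring

lemma strictMonoOn_pow_succ_sub_pow (d : ℕ) :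
    StrictMonoOn (fun y : ℝ => y ^ (d + 1) - y ^ d) (Ici (d / (d + 1))) := by
  refine strictMonoOn_of_deriv_pos (convex_Ici _) (Continuous.continuousOn (by fun_prop))
    fun y hy => ?_
  rw [interior_Ici, mem_Ioi, div_lt_iff₀ (by positivity)] at hy
  have hy0 : 0 < y := by nlinarith
  rw [((hasDerivAt_pow (d + 1) y).fun_sub (hasDerivAt_pow d y)).deriv, Nat.add_sub_cancel]
  have h : y * ((d + 1 : ℕ) * y ^ d - d * y ^ (d - 1)) = y ^ d * ((d + 1) * y - d) := by
    rw [mul_sub, mul_comm y (d * _), natCast_mul_pow_pred_mul]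
    push_cast
    ring
  exact pos_of_mul_pos_right (h ▸ mul_pos (pow_pos hy0 d) (by linarith)) hy0.le

lemma exists_Ioi_subset_cmcSpeedDomain {d : ℕ} {y₁ E : ℝ} (hy₁ : d / (d + 1) < y₁)
    (hgap : y₁ ^ d < y₁ ^ (d + 1) + E) : ∃ l < y₁, Ioi l ⊆ cmcSpeedDomain d E := by
  have hcont : ContinuousAt (fun y : ℝ => y ^ (d + 1) - y ^ d + E) y₁ := by fun_prop
  have hnear : ∀ᶠ y in 𝓝[<] y₁, 0 < y ^ (d + 1) - y ^ d + E ∧ d / (d + 1) < y :=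
    ((hcont.eventually (lt_mem_nhds (by linarith))).filter_mono nhdsWithin_le_nhds).and
      (mem_of_superset (Ioo_mem_nhdsLT hy₁) fun _ hy => hy.1)
  obtain ⟨l, ⟨hl, hdl⟩, hly₁⟩ := (hnear.and self_mem_nhdsWithin).exists
  refine ⟨l, hly₁, fun y hy => ⟨lt_of_le_of_lt (by positivity) (hdl.trans hy), ?_⟩⟩
  have := strictMonoOn_pow_succ_sub_pow d hdl.le (hdl.trans hy).le hy
  simp only at this
  linarith

lemma isExpandingCMCSolutionAt_autonomousFlow {d : ℕ} {E l y₁ t₁ t : ℝ}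
    (hl : Ioi l ⊆ cmcSpeedDomain d E) (hy₁ : l < y₁) (ht : t₁ < t) :
    IsExpandingCMCSolutionAt d (autonomousFlow (cmcSpeed d E) l y₁ t₁) t := by
  have hG : ContDiffOn ℝ (1 : ℕ) (cmcSpeed d E) (Ioi l) := fun y hy =>
    (contDiffAt_cmcSpeed (hl hy)).contDiffWithinAt
  have hG0 : ∀ y ∈ Ioi l, 0 < cmcSpeed d E y := fun y hy => (cmcSpeed_mem_Ioo (hl hy)).1
  have hG1 : ∀ y ∈ Ioi l, cmcSpeed d E y ≤ 1 := fun y hy => (cmcSpeed_mem_Ioo (hl hy)).2.le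
  have hΦ : ∀ s ∈ Ioi t₁, HasDerivAt (autonomousFlow (cmcSpeed d E) l y₁ t₁)
      (cmcSpeed d E (autonomousFlow (cmcSpeed d E) l y₁ t₁ s)) s := fun s hs =>
    hasDerivAt_autonomousFlow hG.continuousOn hG0 hy₁ hG1 hs
  have hdom := hl (autonomousFlow_mem_and_timeMap hG.continuousOn hG0 hy₁ hG1 ht.le).1
  refine ⟨(contDiffOn_autonomousFlow hG hG0 hy₁ hG1).contDiffAt (Ioi_mem_nhds ht), hdom.1, ?_,
    (hΦ t ht).deriv ▸ (cmcSpeed_mem_Ioo hdom).1.le, (hΦ t ht).deriv ▸ (cmcSpeed_mem_Ioo hdom).2⟩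
  unfold SolvesCMCAt
  rw [deriv_deriv_eq_of_eventually_hasDerivAt (eventually_of_mem (Ioi_mem_nhds ht) hΦ)
    ((contDiffAt_cmcSpeed (n := 1) hdom).differentiableAt one_ne_zero), (hΦ t ht).deriv]
  exact cmcSpeed_ode hdom

lemma exists_cmc_extension_of_deriv_pos {d : ℕ} {f : ℝ → ℝ} {t₁ b : ℝ}
    (hf : ∀ t ∈ Ico t₁ b, ContDiffAt ℝ 2 f t) (hpos : ∀ t ∈ Ico t₁ b, 0 < f t)
    (hode : ∀ t ∈ Ico t₁ b, SolvesCMCAt d f t) (hinit : d / (d + 1) < f t₁)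
    (hv0 : 0 < deriv f t₁) (hv1 : deriv f t₁ < 1) :
    ∃ Φ : ℝ → ℝ, (∀ t ∈ Ico t₁ b, f t = Φ t) ∧
      (∀ t, t₁ < t → IsExpandingCMCSolutionAt d Φ t) ∧ Tendsto Φ atTop atTop := by
  set E := cmcEnergy d (f t₁) (deriv f t₁)
  have hv : deriv f t₁ ^ 2 < 1 := by nlinarith
  have hgap : f t₁ ^ d < f t₁ ^ (d + 1) + E := by
    have hσ1 : √(1 - deriv f t₁ ^ 2) < 1 := (Real.sqrt_lt' one_pos).2 (by nlinarith)
    have hσ0 : 0 < √(1 - deriv f t₁ ^ 2) := Real.sqrt_pos.2 (by linarith)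
    have hy : 0 < f t₁ ^ d := pow_pos (lt_of_le_of_lt (by positivity) hinit) d
    have h := (cmcEnergy_eq_iff (d := d) (y := f t₁) hv).1 rfl
    nlinarith
  obtain ⟨l, hly₁, hl⟩ := exists_Ioi_subset_cmcSpeedDomain hinit hgap
  have hG : ContinuousOn (cmcSpeed d E) (Ioi l) := fun y hy =>
    (contDiffAt_cmcSpeed (n := 0) (hl hy)).continuousAt.continuousWithinAt
  have hG0 : ∀ y ∈ Ioi l, 0 < cmcSpeed d E y := fun y hy => (cmcSpeed_mem_Ioo (hl hy)).1
  have hG1 : ∀ y ∈ Ioi l, cmcSpeed d E y ≤ 1 := fun y hy => (cmcSpeed_mem_Ioo (hl hy)).2.le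
  have hinv (t : ℝ) (ht : t ∈ Ico t₁ b) :=
    cmcInvariant_of_mem_Ico hf hpos hode hinit hv0.le hv ht
  refine ⟨autonomousFlow (cmcSpeed d E) l (f t₁) t₁,
    eq_autonomousFlow_of_hasDerivAt hG hG0 hly₁ hG1 (fun t ht => ⟨?_, ?_⟩) rfl,
    fun t ht => isExpandingCMCSolutionAt_autonomousFlow hl hly₁ ht,
    tendsto_autonomousFlow_atTop hG hG0 hly₁ hG1⟩
  · exact hly₁.trans_le (hinv t ht).2.1
  · rw [← eq_cmcSpeed_of_sqrt_mul_eq (hpos t ht) (hinv t ht).1 (hinv t ht).2.2]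
    exact ((hf t ht).differentiableAt two_ne_zero).hasDerivAt

lemma isExpandingCMCSolutionAt_of_mem_Ico {d : ℕ} {f : ℝ → ℝ} {t₀ b : ℝ}
    (hf : ∀ t ∈ Ico t₀ b, ContDiffAt ℝ 2 f t) (hpos : ∀ t ∈ Ico t₀ b, 0 < f t)
    (hode : ∀ t ∈ Ico t₀ b, SolvesCMCAt d f t) (hinit : d / (d + 1) < f t₀)
    (hv0 : 0 ≤ deriv f t₀) (hv1 : deriv f t₀ ^ 2 < 1) {t : ℝ} (ht : t ∈ Ico t₀ b) :
    IsExpandingCMCSolutionAt d f t :=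
  have h := cmcInvariant_of_mem_Ico hf hpos hode hinit hv0 hv1 ht
  ⟨hf t ht, hpos t ht, hode t ht, h.1, h.deriv_lt_one (hpos t ht)⟩

lemma exists_cmc_extension {d : ℕ} {f : ℝ → ℝ} {t₀ b : ℝ}
    (hf : ∀ t ∈ Ico t₀ b, ContDiffAt ℝ 2 f t) (hpos : ∀ t ∈ Ico t₀ b, 0 < f t)
    (hode : ∀ t ∈ Ico t₀ b, SolvesCMCAt d f t) (hinit : d / (d + 1) < f t₀)
    (hv0 : 0 ≤ deriv f t₀) (hv1 : deriv f t₀ ^ 2 < 1) (hb : t₀ < b) :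
    ∃ t₁ < b, ∃ Φ : ℝ → ℝ, (∀ t ∈ Ico t₁ b, f t = Φ t) ∧
      (∀ t, t₁ < t → IsExpandingCMCSolutionAt d Φ t) ∧ Tendsto Φ atTop atTop := by
  -- The time map `∫ dy / G y` needs `G (f t₁) > 0`, so the flow is started where `f' > 0`.
  obtain ⟨t₁, ⟨ht₀t₁, ht₁b⟩, hv₁⟩ : ∃ t₁ ∈ Ioo t₀ b, 0 < deriv f t₁ :=
    ((eventually_deriv_pos_nhdsGT (hf t₀ ⟨le_rfl, hb⟩) (hode t₀ ⟨le_rfl, hb⟩) hinit hv0).and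
      (Ioo_mem_nhdsGT hb)).exists.imp fun _ h => ⟨h.2, h.1⟩
  have hsub : Ico t₁ b ⊆ Ico t₀ b := Ico_subset_Ico_left ht₀t₁.le
  have ht₁ : t₁ ∈ Ico t₀ b := ⟨ht₀t₁.le, ht₁b⟩
  exact ⟨t₁, ht₁b, exists_cmc_extension_of_deriv_pos (fun t ht => hf t (hsub ht))
    (fun t ht => hpos t (hsub ht)) (fun t ht => hode t (hsub ht))
    (hinit.trans_le (cmcInvariant_of_mem_Ico hf hpos hode hinit hv0 hv1 ht₁).2.1) hv₁
    (isExpandingCMCSolutionAt_of_mem_Ico hf hpos hode hinit hv0 hv1 ht₁).deriv_lt_one⟩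

theorem stmt2_general (d : ℕ) (a b t₀ : ℝ) (ht₀ : t₀ ∈ Set.Ioo a b)
    (f : ℝ → ℝ)
    (hf : ContDiffOn ℝ 2 f (Set.Ioo a b))
    (hpos : ∀ t ∈ Set.Ioo a b, 0 < f t)
    (hode : ∀ t ∈ Set.Ioo a b,
      f t * deriv (deriv f) t + (d : ℝ) * (1 - (deriv f t) ^ 2)
        = ((d : ℝ) + 1) * f t * (1 - (deriv f t) ^ 2) ^ ((3 : ℝ) / 2))
    (hinit : f t₀ > (d : ℝ) / ((d : ℝ) + 1))
    (hv : |deriv f t₀| < 1) (hv0 : 0 ≤ deriv f t₀) :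
    ∃ F : ℝ → ℝ,
      (∀ t ∈ Set.Ico t₀ b, F t = f t) ∧
      ContDiffOn ℝ 2 F (Set.Ici t₀) ∧
      (∀ t ∈ Set.Ici t₀, 0 < F t) ∧
      (∀ t ∈ Set.Ici t₀,
        F t * deriv (deriv F) t + (d : ℝ) * (1 - (deriv F t) ^ 2)
          = ((d : ℝ) + 1) * F t * (1 - (deriv F t) ^ 2) ^ ((3 : ℝ) / 2)) ∧
      (∀ t ∈ Set.Ici t₀, 0 ≤ deriv F t ∧ deriv F t < 1) ∧
      Filter.Tendsto F Filter.atTop Filter.atTop := by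
  have hIco : Ico t₀ b ⊆ Ioo a b := Ico_subset_Ioo_left ht₀.1
  have hf2 (t : ℝ) (ht : t ∈ Ico t₀ b) : ContDiffAt ℝ 2 f t :=
    hf.contDiffAt (isOpen_Ioo.mem_nhds (hIco ht))
  have hv1 : deriv f t₀ ^ 2 < 1 := (sq_lt_one_iff_abs_lt_one _).2 hv
  have hsol (t : ℝ) (ht : t ∈ Ico t₀ b) : IsExpandingCMCSolutionAt d f t :=
    isExpandingCMCSolutionAt_of_mem_Ico hf2 (fun t ht => hpos t (hIco ht))
      (fun t ht => hode t (hIco ht)) hinit hv0 hv1 ht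
  obtain ⟨t₁, ht₁b, Φ, hfΦ, hΦ, hΦtop⟩ := exists_cmc_extension hf2 (fun t ht => hpos t (hIco ht))
    (fun t ht => hode t (hIco ht)) hinit hv0 hv1 ht₀.2
  set F := fun t => if t < b then f t else Φ t
  have hF (t : ℝ) (ht : t ∈ Ici t₀) : IsExpandingCMCSolutionAt d F t := by
    rcases lt_or_ge t b with htb | hbt
    · exact (hsol t ⟨ht, htb⟩).congr_of_eventuallyEq
        (eventually_of_mem (Iio_mem_nhds htb) fun s hs => if_pos hs)
    · refine (hΦ t (ht₁b.trans_le hbt)).congr_of_eventuallyEq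
        (eventually_of_mem (Ioi_mem_nhds (ht₁b.trans_le hbt)) fun s hs => ?_)
      by_cases hsb : s < b
      · simpa [F, hsb] using hfΦ s ⟨hs.le, hsb⟩
      · simp [F, hsb]
  exact ⟨F, fun t ht => if_pos ht.2, fun t ht => (hF t ht).contDiffAt.contDiffWithinAt,
    fun t ht => (hF t ht).pos, fun t ht => (hF t ht).solves,
    fun t ht => ⟨(hF t ht).deriv_nonneg, (hF t ht).deriv_lt_one⟩,
    hΦtop.congr' (eventually_of_mem (Ici_mem_atTop b) fun t ht => (if_neg (not_lt.2 ht)).symm)⟩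

/-- Global existence and indefinite expansion: a solution of the spherically symmetric CMC
ODE with `f(t₀) > d/(d+1)`, `0 ≤ f'(t₀) < 1` extends to `[t₀, ∞)` with `0 ≤ f' < 1` and
grows unboundedly. -/
theorem stmt2 (d : ℕ) (hd : 1 ≤ d) (a b t₀ : ℝ) (ht₀ : t₀ ∈ Set.Ioo a b)
    (f : ℝ → ℝ)
    (hf : ContDiffOn ℝ 2 f (Set.Ioo a b))
    (hpos : ∀ t ∈ Set.Ioo a b, 0 < f t)
    (hode : ∀ t ∈ Set.Ioo a b,
      f t * deriv (deriv f) t + (d : ℝ) * (1 - (deriv f t) ^ 2)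
        = ((d : ℝ) + 1) * f t * (1 - (deriv f t) ^ 2) ^ ((3 : ℝ) / 2))
    (hinit : f t₀ > (d : ℝ) / ((d : ℝ) + 1))
    (hv : |deriv f t₀| < 1) (hv0 : 0 ≤ deriv f t₀) :
    ∃ F : ℝ → ℝ,
      (∀ t ∈ Set.Ico t₀ b, F t = f t) ∧
      ContDiffOn ℝ 2 F (Set.Ici t₀) ∧
      (∀ t ∈ Set.Ici t₀, 0 < F t) ∧
      (∀ t ∈ Set.Ici t₀,
        F t * deriv (deriv F) t + (d : ℝ) * (1 - (deriv F t) ^ 2)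
          = ((d : ℝ) + 1) * F t * (1 - (deriv F t) ^ 2) ^ ((3 : ℝ) / 2)) ∧
      (∀ t ∈ Set.Ici t₀, 0 ≤ deriv F t ∧ deriv F t < 1) ∧
      Filter.Tendsto F Filter.atTop Filter.atTop :=
  stmt2_general d a b t₀ ht₀ f hf hpos hode hinit hv hv0
end

section
/- Two distinct solutions f₁, f₂ of the spherically symmetric CMC ODE (with |f'| < 1, f > 0) intersect at most once; and if they do intersect at a point, then f₂ − f₁ is strictly monotonic on the whole common interval of existence. -/
/-!
Write `g = f₂ - f₁`. Where `g' = 0`, the two equations combine to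
`f₁ f₂ g'' = d (1 - f₁'²) g`, and uniqueness for the equation (a first-order system in `(f, f')`
with a locally Lipschitz right-hand side where `f > 0`, `|f'| < 1`) rules out common zeros of
`g` and `g'`. Hence `φ = g g'` satisfies `φ' = g'² + g g'' > 0` at each of its zeros, so `φ`
has at most one zero. Every zero of `g` is a zero of `φ`; and if `g(t₀) = 0`, then `g'` could
only vanish at `t₀`, where it does not, so `g` is strictly monotone.
-/

open Set Filter Topology

theorem subsingleton_zeros_of_hasDerivAt_pos {φ φ' : ℝ → ℝ} {a b : ℝ}
    (hφ : ∀ t ∈ Ioo a b, HasDerivAt φ (φ' t) t)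
    (hpos : ∀ t ∈ Ioo a b, φ t = 0 → 0 < φ' t) :
    {t ∈ Ioo a b | φ t = 0}.Subsingleton := by
  have nonneg_right : ∀ x ∈ Ioo a b, φ x = 0 → ∀ t ∈ Ioo x b, 0 ≤ φ t := by
    intro x hx hx0 t ht
    have hsub : Icc x t ⊆ Ioo a b := fun s hs => ⟨hx.1.trans_le hs.1, hs.2.trans_lt ht.2⟩
    have := image_le_of_deriv_right_lt_deriv_boundary (f := fun s => -φ s) (B := fun _ => 0)
      (HasDerivAt.continuousOn fun s hs => (hφ s (hsub hs)).neg)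
      (fun s hs => (hφ s (hsub (Ico_subset_Icc_self hs))).neg.hasDerivWithinAt)
      (by simp [hx0]) (fun _ => hasDerivAt_const _ (0 : ℝ))
      (fun s hs hs0 => by simpa using hpos s (hsub (Ico_subset_Icc_self hs)) (by simpa using hs0))
      ⟨ht.1.le, le_rfl⟩
    simpa using this
  have no_zero_right : ∀ x ∈ Ioo a b, φ x = 0 → ∀ y ∈ Ioo x b, φ y ≠ 0 := by
    intro x hx hx0 y hy hy0
    have hmin : IsLocalMin φ y :=
      Filter.mem_of_superset (isOpen_Ioo.mem_nhds hy) fun t ht => by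
        simpa [hy0] using nonneg_right x hx hx0 t ht
    have hyI : y ∈ Ioo a b := ⟨hx.1.trans hy.1, hy.2⟩
    exact (hpos y hyI hy0).ne' (hmin.hasDerivAt_eq_zero (hφ y hyI))
  rintro x ⟨hx, hx0⟩ y ⟨hy, hy0⟩
  rcases lt_trichotomy x y with hxy | rfl | hxy
  · exact absurd hy0 (no_zero_right x hx hx0 y ⟨hxy, hy.2⟩)
  · rfl
  · exact absurd hx0 (no_zero_right y hy hy0 x ⟨hxy, hx.2⟩)

theorem strictMonoOn_or_strictAntiOn_of_hasDerivAt_ne_zero {f f' : ℝ → ℝ} {a b : ℝ}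
    (hf : ∀ t ∈ Ioo a b, HasDerivAt f (f' t) t) (hf' : ∀ t ∈ Ioo a b, f' t ≠ 0) :
    StrictMonoOn f (Ioo a b) ∨ StrictAntiOn f (Ioo a b) := by
  have hcont : ContinuousOn f (Ioo a b) := HasDerivAt.continuousOn hf
  have hf_within : ∀ t ∈ interior (Ioo a b), HasDerivWithinAt f (f' t) (interior (Ioo a b)) t :=
    fun t ht => (hf t (interior_subset ht)).hasDerivWithinAt
  rcases hasDerivWithinAt_forall_lt_or_forall_gt_of_forall_ne (convex_Ioo a b)
    (fun t ht => (hf t ht).hasDerivWithinAt) hf' with hneg | hpos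
  · exact Or.inr <| strictAntiOn_of_hasDerivWithinAt_neg (convex_Ioo a b) hcont hf_within
      fun t ht => hneg t (interior_subset ht)
  · exact Or.inl <| strictMonoOn_of_hasDerivWithinAt_pos (convex_Ioo a b) hcont hf_within
      fun t ht => hpos t (interior_subset ht)

theorem eventuallyEq_of_hasDerivAt_of_contDiffAt {E : Type*} [NormedAddCommGroup E]
    [NormedSpace ℝ E] {v : E → E} {γ₁ γ₂ : ℝ → E} {t₀ : ℝ} (hv : ContDiffAt ℝ 1 v (γ₁ t₀))
    (hγ₁ : ∀ᶠ t in 𝓝 t₀, HasDerivAt γ₁ (v (γ₁ t)) t)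
    (hγ₂ : ∀ᶠ t in 𝓝 t₀, HasDerivAt γ₂ (v (γ₂ t)) t) (heq : γ₁ t₀ = γ₂ t₀) :
    γ₁ =ᶠ[𝓝 t₀] γ₂ := by
  obtain ⟨K, s, hs, hlip⟩ := hv.exists_lipschitzOnWith
  have hmem₁ : ∀ᶠ t in 𝓝 t₀, γ₁ t ∈ s := hγ₁.self_of_nhds.continuousAt.preimage_mem_nhds hs
  have hmem₂ : ∀ᶠ t in 𝓝 t₀, γ₂ t ∈ s :=
    hγ₂.self_of_nhds.continuousAt.preimage_mem_nhds (heq ▸ hs)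
  exact ODE_solution_unique_of_eventually (v := fun _ => v) (s := fun _ => s)
    (.of_forall fun _ => hlip) (hγ₁.and hmem₁) (hγ₂.and hmem₂) heq

theorem eqOn_of_hasDerivAt_of_contDiffAt {E : Type*} [NormedAddCommGroup E]
    [NormedSpace ℝ E] {v : E → E} {γ₁ γ₂ : ℝ → E} {U : Set ℝ} {t₀ : ℝ} (hU : IsOpen U)
    (hU' : IsPreconnected U) (hv : ∀ t ∈ U, ContDiffAt ℝ 1 v (γ₁ t))
    (hγ₁ : ∀ t ∈ U, HasDerivAt γ₁ (v (γ₁ t)) t) (hγ₂ : ∀ t ∈ U, HasDerivAt γ₂ (v (γ₂ t)) t)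
    (ht₀ : t₀ ∈ U) (heq : γ₁ t₀ = γ₂ t₀) :
    EqOn γ₁ γ₂ U := by
  have local_eq : ∀ t ∈ U, γ₁ t = γ₂ t → γ₁ =ᶠ[𝓝 t] γ₂ := fun t ht h =>
    eventuallyEq_of_hasDerivAt_of_contDiffAt (hv t ht)
      (eventually_of_mem (hU.mem_nhds ht) hγ₁) (eventually_of_mem (hU.mem_nhds ht) hγ₂) h
  set u := {t ∈ U | γ₁ =ᶠ[𝓝 t] γ₂}
  have hu : IsOpen u := hU.inter (isOpen_setOfPred_eventually_nhds (p := fun t => γ₁ t = γ₂ t))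
  have hUu : U ⊆ u := by
    refine hU'.subset_of_closure_inter_subset hu ⟨t₀, ht₀, ht₀, local_eq t₀ ht₀ heq⟩ ?_
    rintro t ⟨htu, htU⟩
    have hsub : insert t u ⊆ U := insert_subset htU fun s hs => hs.1
    have hcl : EqOn γ₁ γ₂ (insert t u) :=
      EqOn.of_subset_closure (fun s hs => hs.2.eq_of_nhds)
        (HasDerivAt.continuousOn fun s hs => hγ₁ s (hsub hs))
        (HasDerivAt.continuousOn fun s hs => hγ₂ s (hsub hs)) (subset_insert t u)
        (insert_subset htu subset_closure)
    exact ⟨htU, local_eq t htU (hcl (mem_insert t u))⟩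
  exact fun t ht => (hUu ht).2.eq_of_nhds

/-- The CMC equation solved for `f''`, as a vector field in the phase plane `(f, f')`. -/
noncomputable def cmcField (d : ℕ) : ℝ × ℝ → ℝ × ℝ :=
  fun z => (z.2, ((d : ℝ) + 1) * (1 - z.2 ^ 2) ^ ((3 : ℝ) / 2) - (d : ℝ) * (1 - z.2 ^ 2) / z.1)

theorem contDiffAt_cmcField (d : ℕ) {z : ℝ × ℝ} (h₁ : z.1 ≠ 0) (h₂ : 1 - z.2 ^ 2 ≠ 0) :
    ContDiffAt ℝ 1 (cmcField d) z := by
  have hq : ContDiffAt ℝ 1 (fun z : ℝ × ℝ => 1 - z.2 ^ 2) z := by fun_prop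
  exact contDiffAt_snd.prodMk <| (contDiffAt_const.mul (hq.rpow_const_of_ne h₂)).sub <|
    (contDiffAt_const.mul hq).div contDiffAt_fst h₁

structure IsCMCSolution (d : ℕ) (f : ℝ → ℝ) (a b : ℝ) : Prop where
  contDiffOn : ContDiffOn ℝ 2 f (Ioo a b)
  pos : ∀ t ∈ Ioo a b, 0 < f t
  ode : ∀ t ∈ Ioo a b, f t * deriv (deriv f) t + (d : ℝ) * (1 - deriv f t ^ 2)
    = ((d : ℝ) + 1) * f t * (1 - deriv f t ^ 2) ^ ((3 : ℝ) / 2)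

namespace IsCMCSolution

variable {d : ℕ} {f f₁ f₂ : ℝ → ℝ} {a b t : ℝ}

theorem hasDerivAt (h : IsCMCSolution d f a b) (ht : t ∈ Ioo a b) :
    HasDerivAt f (deriv f t) t :=
  ((h.contDiffOn.differentiableOn (by norm_num)).differentiableAt
    (isOpen_Ioo.mem_nhds ht)).hasDerivAt

theorem hasDerivAt_deriv (h : IsCMCSolution d f a b) (ht : t ∈ Ioo a b) :
    HasDerivAt (deriv f) (deriv (deriv f) t) t :=
  (((h.contDiffOn.deriv_of_isOpen isOpen_Ioo (m := 1) (by norm_num)).differentiableOn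
    one_ne_zero).differentiableAt (isOpen_Ioo.mem_nhds ht)).hasDerivAt

theorem hasDerivAt_cmcField (h : IsCMCSolution d f a b) (ht : t ∈ Ioo a b) :
    HasDerivAt (fun t => (f t, deriv f t)) (cmcField d (f t, deriv f t)) t := by
  have hf : f t ≠ 0 := (h.pos t ht).ne'
  have hfield : cmcField d (f t, deriv f t) = (deriv f t, deriv (deriv f) t) := by
    simp only [cmcField, Prod.mk.injEq, true_and]
    field_simp
    linarith [h.ode t ht]
  rw [hfield]
  exact (h.hasDerivAt ht).prodMk (h.hasDerivAt_deriv ht)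

theorem eqOn_of_eq_of_deriv_eq (h₁ : IsCMCSolution d f₁ a b) (h₂ : IsCMCSolution d f₂ a b)
    (hder₁ : ∀ t ∈ Ioo a b, |deriv f₁ t| < 1) (ht : t ∈ Ioo a b) (h0 : f₁ t = f₂ t)
    (h0' : deriv f₁ t = deriv f₂ t) :
    EqOn f₁ f₂ (Ioo a b) := by
  have hv : ∀ s ∈ Ioo a b, ContDiffAt ℝ 1 (cmcField d) (f₁ s, deriv f₁ s) := fun s hs =>
    contDiffAt_cmcField d (h₁.pos s hs).ne' (by nlinarith [abs_lt.1 (hder₁ s hs)])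
  have := eqOn_of_hasDerivAt_of_contDiffAt isOpen_Ioo isPreconnected_Ioo hv
    (fun s hs => h₁.hasDerivAt_cmcField hs) (fun s hs => h₂.hasDerivAt_cmcField hs) ht
    (Prod.ext h0 h0')
  exact fun s hs => congrArg Prod.fst (this hs)

theorem mul_sub_deriv_deriv (h₁ : IsCMCSolution d f₁ a b) (h₂ : IsCMCSolution d f₂ a b)
    (ht : t ∈ Ioo a b) (hp : deriv f₁ t = deriv f₂ t) :
    f₁ t * f₂ t * (deriv (deriv f₂) t - deriv (deriv f₁) t)
      = d * (1 - deriv f₁ t ^ 2) * (f₂ t - f₁ t) := by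
  have e₂ := h₂.ode t ht
  rw [← hp] at e₂
  linear_combination f₁ t * e₂ - f₂ t * h₁.ode t ht

theorem subsingleton_zeros_sub_mul_deriv_sub (hd : 0 < d) (h₁ : IsCMCSolution d f₁ a b)
    (h₂ : IsCMCSolution d f₂ a b) (hder₁ : ∀ t ∈ Ioo a b, |deriv f₁ t| < 1)
    (htransv : ∀ t ∈ Ioo a b, f₁ t = f₂ t → deriv f₁ t ≠ deriv f₂ t) :
    {t ∈ Ioo a b | (f₂ t - f₁ t) * (deriv f₂ t - deriv f₁ t) = 0}.Subsingleton := by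
  refine subsingleton_zeros_of_hasDerivAt_pos
    (φ' := fun t => (deriv f₂ t - deriv f₁ t) ^ 2
      + (f₂ t - f₁ t) * (deriv (deriv f₂) t - deriv (deriv f₁) t))
    (fun t ht => (((h₂.hasDerivAt ht).sub (h₁.hasDerivAt ht)).mul
      ((h₂.hasDerivAt_deriv ht).sub (h₁.hasDerivAt_deriv ht))).congr_deriv
        (by simp only [Pi.sub_apply]; ring)) ?_
  intro t ht hzero
  rcases mul_eq_zero.1 hzero with hg | hg'
  · have : deriv f₂ t - deriv f₁ t ≠ 0 :=
      sub_ne_zero.2 (htransv t ht (sub_eq_zero.1 hg).symm).symm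
    rw [hg, zero_mul, add_zero]
    positivity
  · have hp : deriv f₁ t = deriv f₂ t := (sub_eq_zero.1 hg').symm
    have hg : f₂ t - f₁ t ≠ 0 := fun h => htransv t ht (sub_eq_zero.1 h).symm hp
    have hq : 0 < 1 - deriv f₁ t ^ 2 := by nlinarith [abs_lt.1 (hder₁ t ht)]
    have hgg'' :
        0 < f₁ t * f₂ t * ((f₂ t - f₁ t) * (deriv (deriv f₂) t - deriv (deriv f₁) t)) := by
      rw [mul_left_comm, h₁.mul_sub_deriv_deriv h₂ ht hp, mul_comm, mul_assoc, ← sq]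
      have : (0 : ℝ) < d := by exact_mod_cast hd
      positivity
    rw [hg', sq, zero_mul, zero_add]
    exact pos_of_mul_pos_right hgg'' (mul_pos (h₁.pos t ht) (h₂.pos t ht)).le

end IsCMCSolution

theorem stmt8_general (d : ℕ) (hd : 1 ≤ d) (a b : ℝ) (f₁ f₂ : ℝ → ℝ)
    (hf₁ : ContDiffOn ℝ 2 f₁ (Set.Ioo a b))
    (hf₂ : ContDiffOn ℝ 2 f₂ (Set.Ioo a b))
    (hpos₁ : ∀ t ∈ Set.Ioo a b, 0 < f₁ t)
    (hpos₂ : ∀ t ∈ Set.Ioo a b, 0 < f₂ t)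
    (hder₁ : ∀ t ∈ Set.Ioo a b, |deriv f₁ t| < 1)
    (hode₁ : ∀ t ∈ Set.Ioo a b,
      f₁ t * deriv (deriv f₁) t + (d : ℝ) * (1 - (deriv f₁ t) ^ 2)
        = ((d : ℝ) + 1) * f₁ t * (1 - (deriv f₁ t) ^ 2) ^ ((3 : ℝ) / 2))
    (hode₂ : ∀ t ∈ Set.Ioo a b,
      f₂ t * deriv (deriv f₂) t + (d : ℝ) * (1 - (deriv f₂ t) ^ 2)
        = ((d : ℝ) + 1) * f₂ t * (1 - (deriv f₂ t) ^ 2) ^ ((3 : ℝ) / 2))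
    (hdist : ¬ Set.EqOn f₁ f₂ (Set.Ioo a b)) :
    Set.Subsingleton {t ∈ Set.Ioo a b | f₁ t = f₂ t} ∧
    ((∃ t ∈ Set.Ioo a b, f₁ t = f₂ t) →
      StrictMonoOn (fun t => f₂ t - f₁ t) (Set.Ioo a b) ∨
      StrictAntiOn (fun t => f₂ t - f₁ t) (Set.Ioo a b)) := by
  have h₁ : IsCMCSolution d f₁ a b := ⟨hf₁, hpos₁, hode₁⟩
  have h₂ : IsCMCSolution d f₂ a b := ⟨hf₂, hpos₂, hode₂⟩
  have htransv : ∀ t ∈ Ioo a b, f₁ t = f₂ t → deriv f₁ t ≠ deriv f₂ t := fun t ht h0 h0' =>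
    hdist (h₁.eqOn_of_eq_of_deriv_eq h₂ hder₁ ht h0 h0')
  have hZ := h₁.subsingleton_zeros_sub_mul_deriv_sub hd h₂ hder₁ htransv
  refine ⟨hZ.anti fun t ⟨ht, h0⟩ => ⟨ht, by rw [h0, sub_self, zero_mul]⟩, ?_⟩
  rintro ⟨t₀, ht₀, h0⟩
  refine strictMonoOn_or_strictAntiOn_of_hasDerivAt_ne_zero
    (fun t ht => (h₂.hasDerivAt ht).sub (h₁.hasDerivAt ht)) fun t ht hg' => ?_
  obtain rfl : t = t₀ :=
    hZ ⟨ht, by rw [hg', mul_zero]⟩ ⟨ht₀, by rw [h0, sub_self, zero_mul]⟩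
  exact htransv t ht h0 (sub_eq_zero.1 hg').symm

/-- Two distinct solutions of the spherically symmetric CMC ODE intersect at most once,
and if they do intersect then their difference is strictly monotonic. -/
theorem stmt8 (d : ℕ) (hd : 1 ≤ d) (a b : ℝ) (f₁ f₂ : ℝ → ℝ)
    (hf₁ : ContDiffOn ℝ 2 f₁ (Set.Ioo a b))
    (hf₂ : ContDiffOn ℝ 2 f₂ (Set.Ioo a b))
    (hpos₁ : ∀ t ∈ Set.Ioo a b, 0 < f₁ t)
    (hpos₂ : ∀ t ∈ Set.Ioo a b, 0 < f₂ t)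
    (hder₁ : ∀ t ∈ Set.Ioo a b, |deriv f₁ t| < 1)
    (hder₂ : ∀ t ∈ Set.Ioo a b, |deriv f₂ t| < 1)
    (hode₁ : ∀ t ∈ Set.Ioo a b,
      f₁ t * deriv (deriv f₁) t + (d : ℝ) * (1 - (deriv f₁ t) ^ 2)
        = ((d : ℝ) + 1) * f₁ t * (1 - (deriv f₁ t) ^ 2) ^ ((3 : ℝ) / 2))
    (hode₂ : ∀ t ∈ Set.Ioo a b,
      f₂ t * deriv (deriv f₂) t + (d : ℝ) * (1 - (deriv f₂ t) ^ 2)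
        = ((d : ℝ) + 1) * f₂ t * (1 - (deriv f₂ t) ^ 2) ^ ((3 : ℝ) / 2))
    (hdist : ¬ Set.EqOn f₁ f₂ (Set.Ioo a b)) :
    Set.Subsingleton {t ∈ Set.Ioo a b | f₁ t = f₂ t} ∧
    ((∃ t ∈ Set.Ioo a b, f₁ t = f₂ t) →
      StrictMonoOn (fun t => f₂ t - f₁ t) (Set.Ioo a b) ∨
      StrictAntiOn (fun t => f₂ t - f₁ t) (Set.Ioo a b)) :=
  stmt8_general d hd a b f₁ f₂ hf₁ hf₂ hpos₁ hpos₂ hder₁ hode₁ hode₂ hdist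
end

section
/- Let f be a positive C² solution of the spherically symmetric CMC ODE on (t₀, ∞) with |f'| < 1 and lim_{t→∞} f(t) = ∞. Then lim_{t→∞} f'(t) = 1. -/
/-!
Solved for `f''`, the equation reads `f'' = (1 - f'²) ((d + 1) √(1 - f'²) - d / f)`. Fix
`c ∈ [0, 1)`. Once `f` is large the term `d / f` is negligible, so `f''` is bounded below by a
positive constant wherever `0 ≤ f' ≤ c`; in particular `f'` cannot cross a level in `[0, c]`
downwards. As `f → ∞`, `f' ≥ 0` at some late time, hence ever after. If `f'` stayed below `c`
it would grow linearly, contradicting `|f'| < 1`; so `f' ≥ c` eventually.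
-/

open Filter Set

section Barrier

variable {g g' : ℝ → ℝ}

theorem le_of_hasDerivAt_pos_at_level {s b : ℝ} (hg : ∀ x ≥ s, HasDerivAt g (g' x) x)
    (hb : ∀ x ≥ s, g x = b → 0 < g' x) (hs : b ≤ g s) : ∀ x ≥ s, b ≤ g x := fun _ ht =>
  image_le_of_deriv_right_lt_deriv_boundary' (f := fun _ => b) (f' := fun _ => 0)
    continuousOn_const (fun x _ => hasDerivWithinAt_const x _ b) hs
    (fun x hx => (hg x hx.1).continuousAt.continuousWithinAt)
    (fun x hx => (hg x hx.1).hasDerivWithinAt) (fun x hx hgx => hb x hx.1 hgx.symm)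
    ⟨ht, le_rfl⟩

theorem exists_ge_of_hasDerivAt_ge_of_bounded {s c δ B : ℝ} (hδ : 0 < δ)
    (hg : ∀ x ≥ s, HasDerivAt g (g' x) x) (hbdd : ∀ x ≥ s, g x ≤ B)
    (hacc : ∀ x ≥ s, g x < c → δ ≤ g' x) : ∃ x ≥ s, c ≤ g x := by
  by_contra! hlt
  have hgrow : ∀ y ≥ s, δ * (y - s) ≤ g y - g s := fun y hy =>
    (convex_Ici s).mul_sub_le_image_sub_of_le_deriv
      (fun x hx => (hg x hx).continuousAt.continuousWithinAt)
      (fun x hx => (hg x (by simpa using hx : s < x).le).differentiableAt.differentiableWithinAt)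
      (fun x hx => by
        have hx : s ≤ x := (by simpa using hx : s < x).le
        rw [(hg x hx).deriv]
        exact hacc x hx (hlt x hx))
      s self_mem_Ici y hy hy
  set y := s + (B - g s + 1) / δ
  have hsy : s ≤ y := le_add_of_nonneg_right (div_nonneg (by linarith [hbdd s le_rfl]) hδ.le)
  have hy : δ * (y - s) = B - g s + 1 := by
    simp only [y]
    field_simp
    ring
  linarith [hgrow y hsy, hbdd y hsy]

theorem eventually_le_of_hasDerivAt_ge {T lo c δ B : ℝ} (hδ : 0 < δ) (hlo : lo ≤ c)
    (hg : ∀ x ≥ T, HasDerivAt g (g' x) x) (hbdd : ∀ x ≥ T, g x ≤ B)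
    (hacc : ∀ x ≥ T, lo ≤ g x → g x ≤ c → δ ≤ g' x) (hs : ∃ s ≥ T, lo ≤ g s) :
    ∀ᶠ x in atTop, c ≤ g x := by
  obtain ⟨s, hsT, hs⟩ := hs
  have hlo_after : ∀ x ≥ s, lo ≤ g x :=
    le_of_hasDerivAt_pos_at_level (fun x hx => hg x (hsT.trans hx))
      (fun x hx hgx => hδ.trans_le (hacc x (hsT.trans hx) hgx.ge (hgx ▸ hlo))) hs
  obtain ⟨s', hss', hs'⟩ := exists_ge_of_hasDerivAt_ge_of_bounded hδ
    (fun x hx => hg x (hsT.trans hx)) (fun x hx => hbdd x (hsT.trans hx))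
    (fun x hx hgx => hacc x (hsT.trans hx) (hlo_after x hx) hgx.le)
  exact eventually_atTop.2 ⟨s', le_of_hasDerivAt_pos_at_level
    (fun x hx => hg x (hsT.trans (hss'.trans hx)))
    (fun x hx hgx => hδ.trans_le (hacc x (hsT.trans (hss'.trans hx)) (hgx ▸ hlo) hgx.le)) hs'⟩

end Barrier

theorem exists_deriv_nonneg_of_tendsto_atTop {f : ℝ → ℝ} {T : ℝ}
    (hf : ∀ x ≥ T, DifferentiableAt ℝ f x) (hlim : Tendsto f atTop atTop) :
    ∃ s ≥ T, 0 ≤ deriv f s := by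
  by_contra! hneg
  have hanti : AntitoneOn f (Ici T) := antitoneOn_of_deriv_nonpos (convex_Ici T)
    (fun x hx => (hf x hx).continuousAt.continuousWithinAt)
    (fun x hx => (hf x (by simpa using hx : T < x).le).differentiableWithinAt)
    (fun x hx => (hneg x (by simpa using hx : T < x).le).le)
  obtain ⟨a, ha⟩ := eventually_atTop.1 (hlim.eventually_gt_atTop (f T))
  have := hanti self_mem_Ici (le_max_right a T : T ≤ max a T) (le_max_right a T)
  linarith [ha (max a T) (le_max_left a T)]

-- The CMC equation solved for `f''`: `f'' = cmcRhs d f f'`.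
noncomputable def cmcRhs (d x p : ℝ) : ℝ := (1 - p ^ 2) * ((d + 1) * √(1 - p ^ 2) - d / x)

theorem eq_cmcRhs_of_cmc {d x p q : ℝ} (hx : 0 < x) (hp : |p| < 1)
    (h : x * q + d * (1 - p ^ 2) = (d + 1) * x * (1 - p ^ 2) ^ ((3 : ℝ) / 2)) :
    q = cmcRhs d x p := by
  have hp2 : 0 < 1 - p ^ 2 := by nlinarith [abs_lt.1 hp]
  have h32 : (1 - p ^ 2) ^ ((3 : ℝ) / 2) = (1 - p ^ 2) * √(1 - p ^ 2) := by
    rw [show (3 : ℝ) / 2 = 1 + 1 / 2 by norm_num, Real.rpow_add hp2, Real.rpow_one,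
      Real.sqrt_eq_rpow]
  rw [h32] at h
  unfold cmcRhs
  field_simp
  linarith

theorem le_cmcRhs {d x p c : ℝ} (hd : 0 ≤ d) (hp0 : 0 ≤ p) (hpc : p ≤ c) (hc : c < 1)
    (hdx : d / x ≤ √(1 - c ^ 2) / 2) : (1 - c ^ 2) * (√(1 - c ^ 2) / 2) ≤ cmcRhs d x p := by
  have hpc2 : 1 - c ^ 2 ≤ 1 - p ^ 2 := by nlinarith
  have hc2 : 0 < 1 - c ^ 2 := by nlinarith
  have hsqrt : √(1 - c ^ 2) ≤ √(1 - p ^ 2) := Real.sqrt_le_sqrt hpc2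
  have hinner : √(1 - c ^ 2) / 2 ≤ (d + 1) * √(1 - p ^ 2) - d / x := by
    nlinarith [Real.sqrt_nonneg (1 - p ^ 2)]
  exact mul_le_mul hpc2 hinner (by positivity) (hc2.le.trans hpc2)

theorem stmt9_general (d : ℕ) (t₀ : ℝ) (f : ℝ → ℝ)
    (hf : ContDiffOn ℝ 2 f (Set.Ioi t₀))
    (hpos : ∀ t ∈ Set.Ioi t₀, 0 < f t)
    (hder : ∀ t ∈ Set.Ioi t₀, |deriv f t| < 1)
    (hode : ∀ t ∈ Set.Ioi t₀,
      f t * deriv (deriv f) t + (d : ℝ) * (1 - (deriv f t) ^ 2)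
        = ((d : ℝ) + 1) * f t * (1 - (deriv f t) ^ 2) ^ ((3 : ℝ) / 2))
    (hlim : Filter.Tendsto f Filter.atTop Filter.atTop) :
    Filter.Tendsto (deriv f) Filter.atTop (nhds 1) := by
  have hf' : ∀ t ∈ Ioi t₀, DifferentiableAt ℝ f t := fun t ht =>
    (hf.contDiffAt (Ioi_mem_nhds ht)).differentiableAt two_ne_zero
  have hf'' : ∀ t ∈ Ioi t₀, HasDerivAt (deriv f) (deriv (deriv f) t) t := fun t ht =>
    (((hf.deriv_of_isOpen isOpen_Ioi le_rfl).contDiffAt (Ioi_mem_nhds ht)).differentiableAt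
      one_ne_zero).hasDerivAt
  have hdx : Tendsto (fun t => (d : ℝ) / f t) atTop (nhds 0) :=
    tendsto_const_nhds.div_atTop hlim
  have eventually_ge : ∀ c, 0 ≤ c → c < 1 → ∀ᶠ t in atTop, c ≤ deriv f t := by
    intro c hc0 hc1
    have hc2 : 0 < 1 - c ^ 2 := by nlinarith
    have hsqrt : 0 < √(1 - c ^ 2) / 2 := by positivity
    obtain ⟨T, hT⟩ := eventually_atTop.1 ((eventually_gt_atTop t₀).and
      (hdx.eventually (ge_mem_nhds hsqrt)))
    refine eventually_le_of_hasDerivAt_ge (mul_pos hc2 hsqrt) hc0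
      (fun t ht => hf'' t (hT t ht).1) (fun t ht => (abs_lt.1 (hder t (hT t ht).1)).2.le)
      (fun t ht hp0 hpc => ?_)
      (exists_deriv_nonneg_of_tendsto_atTop (fun t ht => hf' t (hT t ht).1) hlim)
    rw [eq_cmcRhs_of_cmc (hpos t (hT t ht).1) (hder t (hT t ht).1) (hode t (hT t ht).1)]
    exact le_cmcRhs d.cast_nonneg hp0 hpc hc1 (hT t ht).2
  refine tendsto_order.2 ⟨fun c hc => ?_, fun c hc => ?_⟩
  · filter_upwards [eventually_ge (max ((c + 1) / 2) 0) (le_max_right _ _)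
      (max_lt (by linarith) one_pos)] with t ht
    linarith [le_max_left ((c + 1) / 2) 0]
  · filter_upwards [eventually_gt_atTop t₀] with t ht
    exact (abs_lt.1 (hder t ht)).2.trans hc

/-- If a positive solution of the spherically symmetric CMC ODE expands indefinitely, then
`f'(t) → 1` as `t → ∞`. -/
theorem stmt9 (d : ℕ) (hd : 1 ≤ d) (t₀ : ℝ) (f : ℝ → ℝ)
    (hf : ContDiffOn ℝ 2 f (Set.Ioi t₀))
    (hpos : ∀ t ∈ Set.Ioi t₀, 0 < f t)
    (hder : ∀ t ∈ Set.Ioi t₀, |deriv f t| < 1)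
    (hode : ∀ t ∈ Set.Ioi t₀,
      f t * deriv (deriv f) t + (d : ℝ) * (1 - (deriv f t) ^ 2)
        = ((d : ℝ) + 1) * f t * (1 - (deriv f t) ^ 2) ^ ((3 : ℝ) / 2))
    (hlim : Filter.Tendsto f Filter.atTop Filter.atTop) :
    Filter.Tendsto (deriv f) Filter.atTop (nhds 1) :=
  stmt9_general d t₀ f hf hpos hder hode hlim
end

section
/- Consider the scalar ODE ζ'(t) = −(t/(1+t²))·((1+ζ)/(1/(d+1)+ζ))·ζ for t ≥ t₀ > 0. Every solution with initial data ζ(t₀) ∈ (−1/(d+1), ∞) exists globally for t ≥ t₀ and satisfies |ζ(t)| ≲ 1/√(1+t²); in particular ζ(t) → 0 as t → ∞. -/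
/-!
Writing `a = 1/(d+1)` and `Φ(z) = a log|z| + (1-a) log(1+z)` (`potential a`), the equation
reads `Φ'(ζ) ζ' = -t/(1+t²)`, so `Φ(ζ) + ½ log(1+t²)` is a first integral. Existence: on each of
the branches `ζ > 0` and `-a < ζ < 0` the function `Φ` is a monotone bijection onto an interval
unbounded below, so `ζ` is obtained by inverting `Φ`. Decay: the barrier `ζ = c` with
`-a < c < 0` cannot be crossed downwards, since the field is positive there; hence `a + ζ > 0`,
and then `ζ²(1+t²)` is nonincreasing because its derivative is `2tζ²(a-1)/(a+ζ) ≤ 0`.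
-/

open Set Filter Real Topology Function

theorem hasDerivAt_invFun_of_deriv_pos {F F' : ℝ → ℝ} (hF : ∀ y, HasDerivAt F (F' y) y)
    (hF' : ∀ y, 0 < F' y) (y : ℝ) : HasDerivAt (invFun F) (F' y)⁻¹ (F y) := by
  have hmono : StrictMono F := strictMono_of_hasDerivAt_pos hF hF'
  have hcont : Continuous F := continuous_iff_continuousAt.2 fun y => (hF y).continuousAt
  have hleft : LeftInverse (invFun F) F := leftInverse_invFun hmono.injective
  have hrange : range F ∈ 𝓝 (F y) := by
    refine mem_of_superset (Ioo_mem_nhds (hmono (sub_one_lt y)) (hmono (lt_add_one y))) ?_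
    rw [← hcont.image_Ioo_of_strictMono hmono]
    exact image_subset_range _ _
  have hinv_mono : StrictMonoOn (invFun F) (range F) := by
    rintro _ ⟨u, rfl⟩ _ ⟨v, rfl⟩ huv
    rw [hleft u, hleft v]
    exact hmono.lt_iff_lt.1 huv
  have hinv_cont : ContinuousAt (invFun F) (F y) :=
    hinv_mono.continuousAt_of_image_mem_nhds hrange
      (mem_of_superset univ_mem fun u _ => ⟨F u, mem_range_self u, hleft u⟩)
  exact HasDerivAt.of_local_left_inverse hinv_cont (by rw [hleft y]; exact hF y) (hF' y).ne'
    (eventually_of_mem hrange fun _ hx => invFun_eq hx)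

theorem tendsto_zero_of_abs_le_div_sqrt {f : ℝ → ℝ} {t₀ C : ℝ}
    (hf : ∀ t ∈ Ici t₀, |f t| ≤ C / √(1 + t ^ 2)) : Tendsto f atTop (𝓝 0) := by
  have hsqrt : Tendsto (fun t : ℝ => √(1 + t ^ 2)) atTop atTop :=
    tendsto_sqrt_atTop.comp (tendsto_atTop_add_const_left _ 1 (tendsto_pow_atTop two_ne_zero))
  refine squeeze_zero_norm' ?_ ((tendsto_const_nhds (x := C)).div_atTop hsqrt)
  filter_upwards [eventually_ge_atTop t₀] with t ht
  exact hf t ht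

namespace InverseGaussGauge

noncomputable def vectorField (a t z : ℝ) : ℝ := -(t / (1 + t ^ 2)) * ((1 + z) / (a + z)) * z

/-- `Real.log z = log |z|`, so this single formula serves both branches `z > 0` and `z < 0`. -/
noncomputable def potential (a z : ℝ) : ℝ := a * log z + (1 - a) * log (1 + z)

variable {a t₀ : ℝ}

theorem hasDerivAt_potential {z : ℝ} (hz : z ≠ 0) (hz' : 1 + z ≠ 0) :
    HasDerivAt (potential a) ((a + z) / (z * (1 + z))) z := by
  have h := ((hasDerivAt_log hz).const_mul a).add
    ((((hasDerivAt_id' z).const_add 1).log hz').const_mul (1 - a))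
  refine h.congr_deriv ?_
  field_simp
  ring

theorem tendsto_potential_nhdsNE_zero (ha : 0 < a) : Tendsto (potential a) (𝓝[≠] 0) atBot := by
  have hcont : ContinuousAt (fun z => (1 - a) * log (1 + z)) 0 := by
    fun_prop (disch := norm_num)
  have hlim : Tendsto (fun z => (1 - a) * log (1 + z)) (𝓝[≠] 0) (𝓝 0) := by
    simpa using hcont.tendsto.mono_left nhdsWithin_le_nhds
  exact (tendsto_log_nhdsNE_zero.const_mul_atBot ha).atBot_add hlim

theorem exists_solution_of_parametrization (ha : 0 < a) (ht₀ : 0 ≤ t₀) {ψ ψ' : ℝ → ℝ}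
    (hψ : ∀ y, HasDerivAt ψ (ψ' y) y) (hψ₀ : ∀ y, ψ y ≠ 0) (hψ₁ : ∀ y, 1 + ψ y ≠ 0)
    (hpos : ∀ y, 0 < (a + ψ y) / (ψ y * (1 + ψ y)) * ψ' y) (hlim : Tendsto ψ atBot (𝓝[≠] 0))
    (y₀ : ℝ) :
    ∃ ζ : ℝ → ℝ, ζ t₀ = ψ y₀ ∧ ∀ t ∈ Ici t₀, HasDerivAt ζ (vectorField a t (ζ t)) t := by
  set F := potential a ∘ ψ
  have hF : ∀ y, HasDerivAt F ((a + ψ y) / (ψ y * (1 + ψ y)) * ψ' y) y := fun y =>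
    (hasDerivAt_potential (hψ₀ y) (hψ₁ y)).comp y (hψ y)
  have hcont : Continuous F := continuous_iff_continuousAt.2 fun y => (hF y).continuousAt
  set g : ℝ → ℝ := fun t => F y₀ - (log (1 + t ^ 2) - log (1 + t₀ ^ 2)) / 2
  have hg : ∀ t, HasDerivAt g (-(t / (1 + t ^ 2))) t := by
    intro t
    have h := (((hasDerivAt_pow 2 t).const_add 1).log (by positivity)).sub_const
      (log (1 + t₀ ^ 2)) |>.div_const 2 |>.const_sub (F y₀)
    refine h.congr_deriv ?_
    push_cast
    ring
  have hg_range : ∀ t ∈ Ici t₀, ∃ y, F y = g t := by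
    intro t ht
    have hle : g t ≤ F y₀ := by
      have : log (1 + t₀ ^ 2) ≤ log (1 + t ^ 2) :=
        log_le_log (by positivity) (by nlinarith [mem_Ici.1 ht])
      simp only [g]
      linarith
    obtain ⟨y₁, hy₁⟩ :=
      (((tendsto_potential_nhdsNE_zero ha).comp hlim).eventually (eventually_le_atBot (g t))).exists
    obtain ⟨y, -, hy⟩ :=
      intermediate_value_uIcc hcont.continuousOn (mem_uIcc_of_le hy₁ hle)
    exact ⟨y, hy⟩
  refine ⟨fun t => ψ (invFun F (g t)), ?_, fun t ht => ?_⟩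
  · have hinj : Injective F := (strictMono_of_hasDerivAt_pos hF hpos).injective
    simp [g, leftInverse_invFun hinj y₀]
  · set y := invFun F (g t)
    have hy : F y = g t := invFun_eq (hg_range t ht)
    have hinv := hasDerivAt_invFun_of_deriv_pos hF hpos y
    rw [hy] at hinv
    have h := (hψ y).comp t (hinv.comp t (hg t))
    refine h.congr_deriv ?_
    have hψ' : ψ' y ≠ 0 := fun h => by simpa [h] using hpos y
    have ha' : a + ψ y ≠ 0 := fun h => by simpa [h] using hpos y
    have := hψ₀ y
    have := hψ₁ y
    change _ = vectorField a t (ψ y)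
    simp only [vectorField]
    field_simp

theorem exists_solution_of_pos (ha : 0 < a) (ht₀ : 0 ≤ t₀) {z₀ : ℝ} (hz : 0 < z₀) :
    ∃ ζ : ℝ → ℝ, ζ t₀ = z₀ ∧ ∀ t ∈ Ici t₀, HasDerivAt ζ (vectorField a t (ζ t)) t := by
  have h := exists_solution_of_parametrization ha ht₀ hasDerivAt_exp (fun y => (exp_pos y).ne')
    (fun y => by positivity) (fun y => by positivity)
    (tendsto_nhdsWithin_mono_right (fun _ h => ne_of_gt h) tendsto_exp_atBot_nhdsGT) (log z₀)
  rwa [exp_log hz] at h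

theorem exists_solution_of_neg (ha : 0 < a) (ha₁ : a ≤ 1) (ht₀ : 0 ≤ t₀) {z₀ : ℝ}
    (hz : -a < z₀) (hz₀ : z₀ < 0) :
    ∃ ζ : ℝ → ℝ, ζ t₀ = z₀ ∧ ∀ t ∈ Ici t₀, HasDerivAt ζ (vectorField a t (ζ t)) t := by
  -- `ψ` is a decreasing bijection of `ℝ` onto `(-a, 0)`, tending to `0` at `-∞`
  set ψ : ℝ → ℝ := fun y => -(a * exp y / (1 + exp y))
  have hψ : ∀ y, HasDerivAt ψ (-(a * exp y / (1 + exp y) ^ 2)) y := by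
    intro y
    refine (((hasDerivAt_exp y).const_mul a).div ((hasDerivAt_exp y).const_add 1)
      (by positivity)).neg.congr_deriv ?_
    field_simp
    ring
  have hψ₀ : ∀ y, ψ y ≠ 0 := fun y => neg_ne_zero.2 (by positivity)
  have hψ₁ : ∀ y, 1 + ψ y = (1 + (1 - a) * exp y) / (1 + exp y) := fun y => by
    simp only [ψ]
    field_simp
    ring
  have hpos₁ : ∀ y, 0 < 1 + (1 - a) * exp y := fun y => by nlinarith [exp_pos y]
  have hpos : ∀ y, 0 < (a + ψ y) / (ψ y * (1 + ψ y)) * -(a * exp y / (1 + exp y) ^ 2) := by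
    intro y
    have := hpos₁ y
    have hψa : (a + ψ y) / (ψ y * (1 + ψ y)) * -(a * exp y / (1 + exp y) ^ 2)
        = a / ((1 + (1 - a) * exp y) * (1 + exp y)) := by
      rw [hψ₁]
      simp only [ψ]
      field_simp
      ring
    rw [hψa]
    positivity
  have hlim : Tendsto ψ atBot (𝓝[≠] 0) := by
    refine tendsto_nhdsWithin_iff.2 ⟨?_, Eventually.of_forall hψ₀⟩
    have hcont : ContinuousAt (fun u : ℝ => -(a * u / (1 + u))) 0 := by
      fun_prop (disch := norm_num)
    have h0 : Tendsto (fun u : ℝ => -(a * u / (1 + u))) (𝓝 0) (𝓝 0) := by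
      simpa using hcont.tendsto
    exact h0.comp tendsto_exp_atBot
  have h := exists_solution_of_parametrization ha ht₀ hψ hψ₀
    (fun y => by rw [hψ₁]; have := hpos₁ y; positivity) hpos hlim (log (-z₀ / (a + z₀)))
  have hψz₀ : ψ (log (-z₀ / (a + z₀))) = z₀ := by
    have hz' : a + z₀ ≠ 0 := by linarith
    have := ha.ne'
    simp only [ψ]
    rw [exp_log (div_pos (by linarith) (by linarith)), one_add_div hz', add_neg_cancel_right]
    field_simp
  rwa [hψz₀] at h

theorem exists_solution (ha : 0 < a) (ha₁ : a ≤ 1) (ht₀ : 0 ≤ t₀) {z₀ : ℝ} (hz : -a < z₀) :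
    ∃ ζ : ℝ → ℝ, ζ t₀ = z₀ ∧ ∀ t ∈ Ici t₀, HasDerivAt ζ (vectorField a t (ζ t)) t := by
  rcases lt_trichotomy z₀ 0 with hneg | rfl | hpos
  · exact exists_solution_of_neg ha ha₁ ht₀ hz hneg
  · exact ⟨fun _ => 0, rfl, fun t _ => by simpa [vectorField] using hasDerivAt_const t (0 : ℝ)⟩
  · exact exists_solution_of_pos ha ht₀ hpos

variable {ζ : ℝ → ℝ}

theorem neg_lt_of_hasDerivWithinAt_vectorField (ha : 0 < a) (ha₁ : a ≤ 1) (ht₀ : 0 < t₀)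
    (hz : -a < ζ t₀)
    (hζ : ∀ t ∈ Ici t₀, HasDerivWithinAt ζ (vectorField a t (ζ t)) (Ici t₀) t) :
    ∀ t ∈ Ici t₀, -a < ζ t := by
  set c := (-a + min (ζ t₀) 0) / 2
  have hac : -a < c := by have := lt_min hz (neg_lt_zero.2 ha); simp only [c]; linarith
  have hc₀ : c < 0 := by have := min_le_right (ζ t₀) 0; simp only [c]; linarith
  have hcz : c ≤ ζ t₀ := by have := min_le_left (ζ t₀) 0; simp only [c]; linarith
  have hbarrier : ∀ x ∈ Ici t₀, 0 < vectorField a x c := by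
    intro x hx
    have hx₀ : 0 < x := ht₀.trans_le hx
    have h : 0 < x / (1 + x ^ 2) * ((1 + c) / (a + c)) * -c :=
      mul_pos (mul_pos (by positivity) (div_pos (by linarith) (by linarith))) (by linarith)
    simp only [vectorField]
    linarith
  intro t ht
  have hle := image_le_of_deriv_right_lt_deriv_boundary (a := t₀) (b := t)
    (f' := fun s => -vectorField a s (ζ s)) (B := fun _ => -c) (B' := fun _ => 0)
    (fun s hs => ((hζ s hs.1).continuousWithinAt.mono Icc_subset_Ici_self).neg)
    (fun s hs => ((hζ s hs.1).mono (Ici_subset_Ici.2 hs.1)).neg) (neg_le_neg hcz)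
    (fun _ => hasDerivAt_const _ (-c))
    (fun s hs hs' => by have := hbarrier s hs.1; rw [neg_inj.1 hs']; linarith) ⟨ht, le_rfl⟩
  linarith [neg_le_neg_iff.1 hle]

theorem sq_mul_one_add_sq_le (ha₁ : a ≤ 1) (ht₀ : 0 ≤ t₀) (hζa : ∀ t ∈ Ici t₀, -a < ζ t)
    (hζ : ∀ t ∈ Ici t₀, HasDerivWithinAt ζ (vectorField a t (ζ t)) (Ici t₀) t) :
    ∀ t ∈ Ici t₀, ζ t ^ 2 * (1 + t ^ 2) ≤ ζ t₀ ^ 2 * (1 + t₀ ^ 2) := by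
  have hderiv : ∀ s ∈ Ici t₀, HasDerivWithinAt (fun s => ζ s ^ 2 * (1 + s ^ 2))
      (2 * s * ζ s ^ 2 * (a - 1) / (a + ζ s)) (Ici t₀) s := by
    intro s hs
    have : a + ζ s ≠ 0 := by linarith [hζa s hs]
    refine (((hζ s hs).pow 2).mul
      ((hasDerivAt_pow 2 s).const_add 1).hasDerivWithinAt).congr_deriv ?_
    simp only [vectorField, Pi.pow_apply]
    field_simp
    ring
  intro t ht
  refine image_le_of_deriv_right_le_deriv_boundary (B := fun _ => ζ t₀ ^ 2 * (1 + t₀ ^ 2))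
    (B' := fun _ => 0) (fun s hs => (hderiv s hs.1).continuousWithinAt.mono Icc_subset_Ici_self)
    (fun s hs => (hderiv s hs.1).mono (Ici_subset_Ici.2 hs.1)) le_rfl continuousOn_const
    (fun s _ => hasDerivWithinAt_const _ _ _) (fun s hs => ?_) ⟨ht, le_rfl⟩
  have := hζa s hs.1
  have : 0 ≤ s := ht₀.trans hs.1
  exact div_nonpos_of_nonpos_of_nonneg
    (mul_nonpos_of_nonneg_of_nonpos (by positivity) (by linarith)) (by linarith)

theorem abs_le_div_sqrt (ha₁ : a ≤ 1) (ht₀ : 0 ≤ t₀) (hζa : ∀ t ∈ Ici t₀, -a < ζ t)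
    (hζ : ∀ t ∈ Ici t₀, HasDerivWithinAt ζ (vectorField a t (ζ t)) (Ici t₀) t) :
    ∀ t ∈ Ici t₀, |ζ t| ≤ |ζ t₀| * √(1 + t₀ ^ 2) / √(1 + t ^ 2) := by
  intro t ht
  have h := sqrt_le_sqrt (sq_mul_one_add_sq_le ha₁ ht₀ hζa hζ t ht)
  rw [sqrt_mul (sq_nonneg _), sqrt_mul (sq_nonneg _), sqrt_sq_eq_abs, sqrt_sq_eq_abs] at h
  rwa [le_div_iff₀ (by positivity)]

end InverseGaussGauge

theorem stmt12_general (d : ℕ) (t₀ z₀ : ℝ) (ht₀ : 0 < t₀)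
    (hz : -1 / ((d : ℝ) + 1) < z₀) :
    (∃ ζ : ℝ → ℝ, ζ t₀ = z₀ ∧
      ∀ t ∈ Set.Ici t₀,
        HasDerivWithinAt ζ
          (-(t / (1 + t ^ 2)) * ((1 + ζ t) / (1 / ((d : ℝ) + 1) + ζ t)) * ζ t)
          (Set.Ici t₀) t) ∧
    ∀ ζ : ℝ → ℝ, ζ t₀ = z₀ →
      (∀ t ∈ Set.Ici t₀,
        HasDerivWithinAt ζ
          (-(t / (1 + t ^ 2)) * ((1 + ζ t) / (1 / ((d : ℝ) + 1) + ζ t)) * ζ t)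
          (Set.Ici t₀) t) →
      (∃ C : ℝ, ∀ t ∈ Set.Ici t₀, |ζ t| ≤ C / Real.sqrt (1 + t ^ 2)) ∧
      Filter.Tendsto ζ Filter.atTop (nhds 0) := by
  set a : ℝ := 1 / ((d : ℝ) + 1)
  have ha : 0 < a := by positivity
  have ha₁ : a ≤ 1 := div_le_one_of_le₀ (by linarith [d.cast_nonneg (α := ℝ)]) (by positivity)
  have hza : -a < z₀ := by rwa [neg_div] at hz
  refine ⟨?_, fun ζ hζ₀ hζ => ?_⟩
  · obtain ⟨ζ, hζ₀, hζ⟩ := InverseGaussGauge.exists_solution ha ha₁ ht₀.le hza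
    exact ⟨ζ, hζ₀, fun t ht => (hζ t ht).hasDerivWithinAt⟩
  · have hζa :=
      InverseGaussGauge.neg_lt_of_hasDerivWithinAt_vectorField ha ha₁ ht₀ (hζ₀ ▸ hza) hζ
    have hbound := InverseGaussGauge.abs_le_div_sqrt ha₁ ht₀.le hζa hζ
    exact ⟨⟨_, hbound⟩, tendsto_zero_of_abs_le_div_sqrt hbound⟩

/-- In the inverse-Gauss-map gauge, the spherically symmetric evolution
`ζ' = −(t/(1+t²))·((1+ζ)/(1/(d+1)+ζ))·ζ` with data `ζ(t₀) > −1/(d+1)` at `t₀ > 0` has a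
global solution on `[t₀, ∞)`, and every such solution decays like `1/√(1+t²)`; in
particular `ζ(t) → 0`. -/
theorem stmt12 (d : ℕ) (hd : 1 ≤ d) (t₀ z₀ : ℝ) (ht₀ : 0 < t₀)
    (hz : -1 / ((d : ℝ) + 1) < z₀) :
    (∃ ζ : ℝ → ℝ, ζ t₀ = z₀ ∧
      ∀ t ∈ Set.Ici t₀,
        HasDerivWithinAt ζ
          (-(t / (1 + t ^ 2)) * ((1 + ζ t) / (1 / ((d : ℝ) + 1) + ζ t)) * ζ t)
          (Set.Ici t₀) t) ∧
    ∀ ζ : ℝ → ℝ, ζ t₀ = z₀ →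
      (∀ t ∈ Set.Ici t₀,
        HasDerivWithinAt ζ
          (-(t / (1 + t ^ 2)) * ((1 + ζ t) / (1 / ((d : ℝ) + 1) + ζ t)) * ζ t)
          (Set.Ici t₀) t) →
      (∃ C : ℝ, ∀ t ∈ Set.Ici t₀, |ζ t| ≤ C / Real.sqrt (1 + t ^ 2)) ∧
      Filter.Tendsto ζ Filter.atTop (nhds 0) :=
  stmt12_general d t₀ z₀ ht₀ hz
end

section
/- For the ODE ζ' = −(t/(1+t²))·((1+ζ)/(1/(d+1)+ζ))·ζ with t₀ > 0 and initial data ζ(t₀) ∈ (−1/(d+1), 0), the solution satisfies the stronger decay |ζ(t)| ≤ C·(1+t²)^{-(d+1)/2} for t ≥ t₀. -/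
private lemma wderiv (q t : ℝ) :
    HasDerivAt (fun s : ℝ => (1 + s ^ 2) ^ q)
      (2 * q * (t / (1 + t ^ 2)) * (1 + t ^ 2) ^ q) t := by
  have h1t : (0:ℝ) < 1 + t ^ 2 := by positivity
  have hbase : HasDerivAt (fun s : ℝ => 1 + s ^ 2) (2 * t) t := by
    simpa using (hasDerivAt_pow 2 t).const_add 1
  have h := hbase.rpow_const (p := q) (Or.inl (ne_of_gt h1t))
  have heq : 2 * t * q * (1 + t ^ 2) ^ (q - 1)
      = 2 * q * (t / (1 + t ^ 2)) * (1 + t ^ 2) ^ q := by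
    rw [Real.rpow_sub h1t, Real.rpow_one]
    ring
  rwa [heq] at h

private lemma expderiv (L t : ℝ) :
    HasDerivAt (fun s : ℝ => Real.exp (L * s)) (L * Real.exp (L * t)) t := by
  simpa [mul_comm] using ((hasDerivAt_id t).const_mul L).exp

set_option maxHeartbeats 1000000 in
/-- For negative initial data `−1/(d+1) < ζ(t₀) < 0`, solutions of the
inverse-Gauss-map-gauge ODE enjoy the stronger decay `|ζ(t)| ≤ C·(1+t²)^{-(d+1)/2}`. -/
theorem stmt13 (d : ℕ) (hd : 1 ≤ d) (t₀ : ℝ) (ht₀ : 0 < t₀) (ζ : ℝ → ℝ)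
    (hz₁ : -1 / ((d : ℝ) + 1) < ζ t₀) (hz₂ : ζ t₀ < 0)
    (hode : ∀ t ∈ Set.Ici t₀,
      HasDerivWithinAt ζ
        (-(t / (1 + t ^ 2)) * ((1 + ζ t) / (1 / ((d : ℝ) + 1) + ζ t)) * ζ t)
        (Set.Ici t₀) t) :
    ∃ C : ℝ, ∀ t ∈ Set.Ici t₀, |ζ t| ≤ C * (1 + t ^ 2) ^ (-((d : ℝ) + 1) / 2) := by
  have hd1 : (1:ℝ) ≤ (d:ℝ) := by exact_mod_cast hd
  have hdpos : (0:ℝ) < (d:ℝ) + 1 := by linarith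
  have ha : 0 < 1 / ((d:ℝ) + 1) := by positivity
  have ha2 : 1 / ((d:ℝ) + 1) ≤ 1/2 := by
    rw [div_le_div_iff₀ hdpos (by norm_num)] ; linarith
  have hza : -(1 / ((d:ℝ) + 1)) < ζ t₀ := by rw [← neg_div]; exact hz₁
  set b₀ : ℝ := (ζ t₀ - 1 / ((d:ℝ) + 1)) / 2 with hb₀_def
  have hb₀1 : -(1 / ((d:ℝ) + 1)) < b₀ := by rw [hb₀_def]; linarith
  have hb₀2 : b₀ < ζ t₀ := by rw [hb₀_def]; linarith
  have hb₀3 : b₀ < 0 := lt_trans hb₀2 hz₂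
  have hab₀ : 0 < 1 / ((d:ℝ) + 1) + b₀ := by linarith
  have h1b₀ : 0 < 1 + b₀ := by linarith
  set L : ℝ := (1 + b₀) / (1 / ((d:ℝ) + 1) + b₀) with hL_def
  have hL : 0 < L := div_pos h1b₀ hab₀
  have hζC : ContinuousOn ζ (Set.Ici t₀) := fun s hs => (hode s hs).continuousWithinAt
  have hwpos : ∀ t : ℝ, (0:ℝ) < (1 + t ^ 2) ^ (((d:ℝ) + 1) / 2) :=
    fun t => Real.rpow_pos_of_pos (by positivity) _
  have hwC : Continuous (fun t : ℝ => (1 + t ^ 2) ^ (((d:ℝ) + 1) / 2)) := by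
    apply Continuous.rpow_const (by continuity)
    intro t; left; positivity
  set S : Set ℝ := {t : ℝ | ζ t₀ ≤ ζ t ∧
      ζ t * Real.exp (L * t) ≤ ζ t₀ * Real.exp (L * t₀) ∧
      ζ t₀ * (1 + t₀ ^ 2) ^ (((d:ℝ) + 1) / 2) ≤ ζ t * (1 + t ^ 2) ^ (((d:ℝ) + 1) / 2)}
    with hS_def
  have key : ∀ b : ℝ, Set.Icc t₀ b ⊆ S := by
    intro b
    apply IsClosed.Icc_subset_of_forall_exists_gt
    · -- closedness
      have hsub0 : Set.Icc t₀ b ⊆ Set.Ici t₀ := fun s hs => hs.1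
      have c1 : ContinuousOn ζ (Set.Icc t₀ b) := hζC.mono hsub0
      have hexpC : Continuous (fun t : ℝ => Real.exp (L * t)) := by continuity
      have heq : S ∩ Set.Icc t₀ b =
          (Set.Icc t₀ b ∩ (fun t : ℝ => ζ t - ζ t₀) ⁻¹' Set.Ici 0) ∩
          ((Set.Icc t₀ b ∩ (fun t : ℝ => ζ t₀ * Real.exp (L * t₀)
              - ζ t * Real.exp (L * t)) ⁻¹' Set.Ici 0) ∩
           (Set.Icc t₀ b ∩ (fun t : ℝ => ζ t * (1 + t ^ 2) ^ (((d:ℝ) + 1) / 2)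
              - ζ t₀ * (1 + t₀ ^ 2) ^ (((d:ℝ) + 1) / 2)) ⁻¹' Set.Ici 0)) := by
        ext t
        simp only [hS_def, Set.mem_inter_iff, Set.mem_setOf_eq, Set.mem_preimage, Set.mem_Ici]
        constructor
        · rintro ⟨⟨h1, h2, h3⟩, ht⟩
          exact ⟨⟨ht, by linarith⟩, ⟨ht, by linarith⟩, ⟨ht, by linarith⟩⟩
        · rintro ⟨⟨ht, h1⟩, ⟨_, h2⟩, ⟨_, h3⟩⟩
          exact ⟨⟨by linarith, by linarith, by linarith⟩, ht⟩
      rw [heq]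
      exact (((c1.sub continuousOn_const).preimage_isClosed_of_isClosed
          isClosed_Icc isClosed_Ici).inter
        (((continuousOn_const.sub (c1.mul hexpC.continuousOn)).preimage_isClosed_of_isClosed
            isClosed_Icc isClosed_Ici).inter
         (((c1.mul hwC.continuousOn).sub continuousOn_const).preimage_isClosed_of_isClosed
            isClosed_Icc isClosed_Ici)))
    · exact ⟨le_refl _, le_refl _, le_refl _⟩
    · rintro x ⟨⟨hx1, hx2, hx3⟩, hxt₀, hxb⟩ y' hy'
      have hζx_neg : ζ x < 0 := by
        by_contra h
        push_neg at h
        nlinarith [mul_nonneg h (Real.exp_pos (L * x)).le,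
          mul_neg_of_neg_of_pos hz₂ (Real.exp_pos (L * t₀))]
      have hζx_b : b₀ < ζ x := lt_of_lt_of_le hb₀2 hx1
      obtain ⟨ε, hε, hball⟩ := Metric.mem_nhdsWithin_iff.1
        ((hζC x hxt₀) (Ioo_mem_nhds hζx_b hζx_neg))
      set y : ℝ := min (x + ε / 2) y' with hy_def
      have hxy : x < y := lt_min (by linarith) hy'
      have hsubxy : Set.Icc x y ⊆ Set.Ici t₀ := fun s hs => le_trans hxt₀ hs.1
      have hmem : ∀ s ∈ Set.Icc x y, b₀ < ζ s ∧ ζ s < 0 := by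
        intro s hs
        have hy2 : y ≤ x + ε / 2 := min_le_left _ _
        have h1 : s ∈ Metric.ball x ε := by
          rw [Real.ball_eq_Ioo]
          constructor
          · linarith [hs.1]
          · linarith [hs.2]
        exact hball ⟨h1, hsubxy hs⟩
      -- common facts for interior points
      have hfacts : ∀ s ∈ Set.Ioo x y,
          (0 < 1 / ((d:ℝ) + 1) + ζ s) ∧ (0 ≤ 1 + ζ s) ∧ (0 ≤ s / (1 + s ^ 2)) ∧
          (s / (1 + s ^ 2) ≤ 1) ∧ ζ s < 0 ∧ b₀ < ζ s := by
        intro s hs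
        obtain ⟨hsb, hsneg⟩ := hmem s ⟨hs.1.le, hs.2.le⟩
        have hspos : 0 < s := lt_of_lt_of_le ht₀ (le_trans hxt₀ hs.1.le)
        refine ⟨by linarith, by linarith, div_nonneg hspos.le (by positivity), ?_, hsneg, hsb⟩
        rw [div_le_one (by positivity)]
        nlinarith [sq_nonneg (s - 1)]
      -- ζ is monotone on [x, y]
      have hmonoζ : MonotoneOn ζ (Set.Icc x y) := by
        refine monotoneOn_of_hasDerivWithinAt_nonneg (convex_Icc x y) (hζC.mono hsubxy)
          (f' := fun s => -(s / (1 + s ^ 2)) * ((1 + ζ s) / (1 / ((d:ℝ) + 1) + ζ s)) * ζ s)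
          ?_ ?_
        · simp only [interior_Icc]
          intro s hs
          exact (hode s (le_trans hxt₀ hs.1.le)).mono (fun u hu => le_trans hxt₀ hu.1.le)
        · simp only [interior_Icc]
          intro s hs
          obtain ⟨haz, h1z, hc0, hc1, hsneg, hsb⟩ := hfacts s hs
          have heq : -(s / (1 + s ^ 2)) * ((1 + ζ s) / (1 / ((d:ℝ) + 1) + ζ s)) * ζ s
              = (s / (1 + s ^ 2)) * ((1 + ζ s) / (1 / ((d:ℝ) + 1) + ζ s)) * (-ζ s) := by ring
          rw [heq]
          exact mul_nonneg (mul_nonneg hc0 (div_nonneg h1z haz.le)) (by linarith)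
      -- ζ·exp(L·) is antitone on [x, y]
      have hantih : AntitoneOn (fun t => ζ t * Real.exp (L * t)) (Set.Icc x y) := by
        refine antitoneOn_of_hasDerivWithinAt_nonpos (convex_Icc x y)
          ((hζC.mono hsubxy).mul (by continuity : Continuous fun t : ℝ => Real.exp (L * t)).continuousOn)
          (f' := fun s => (-(s / (1 + s ^ 2)) * ((1 + ζ s) / (1 / ((d:ℝ) + 1) + ζ s)) * ζ s)
            * Real.exp (L * s) + ζ s * (L * Real.exp (L * s))) ?_ ?_
        · simp only [interior_Icc]
          intro s hs
          exact ((hode s (le_trans hxt₀ hs.1.le)).mono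
            (fun u hu => le_trans hxt₀ hu.1.le)).mul (expderiv L s).hasDerivWithinAt
        · simp only [interior_Icc]
          intro s hs
          obtain ⟨haz, h1z, hc0, hc1, hsneg, hsb⟩ := hfacts s hs
          have hF0 : 0 ≤ (1 + ζ s) / (1 / ((d:ℝ) + 1) + ζ s) := div_nonneg h1z haz.le
          have hFL : (1 + ζ s) / (1 / ((d:ℝ) + 1) + ζ s) ≤ L := by
            rw [hL_def, div_le_div_iff₀ haz hab₀]
            nlinarith [mul_nonneg (by linarith : (0:ℝ) ≤ ζ s - b₀)
              (by linarith : (0:ℝ) ≤ 1 - 1 / ((d:ℝ) + 1))]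
          have hcF : (s / (1 + s ^ 2)) * ((1 + ζ s) / (1 / ((d:ℝ) + 1) + ζ s)) ≤ L := by
            calc (s / (1 + s ^ 2)) * ((1 + ζ s) / (1 / ((d:ℝ) + 1) + ζ s)) ≤ 1 * L :=
                  mul_le_mul hc1 hFL hF0 zero_le_one
              _ = L := one_mul L
          have h2 : (s / (1 + s ^ 2)) * ((1 + ζ s) / (1 / ((d:ℝ) + 1) + ζ s)) * (-ζ s)
              ≤ L * (-ζ s) := mul_le_mul_of_nonneg_right hcF (by linarith)
          have hsum : -(s / (1 + s ^ 2)) * ((1 + ζ s) / (1 / ((d:ℝ) + 1) + ζ s)) * ζ s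
              + L * ζ s ≤ 0 := by nlinarith [h2]
          nlinarith [mul_nonneg (Real.exp_pos (L * s)).le (neg_nonneg.2 hsum),
            Real.exp_pos (L * s)]
      -- ζ·(1+t²)^((d+1)/2) is monotone on [x, y]
      have hmonog : MonotoneOn
          (fun t => ζ t * (1 + t ^ 2) ^ (((d:ℝ) + 1) / 2)) (Set.Icc x y) := by
        refine monotoneOn_of_hasDerivWithinAt_nonneg (convex_Icc x y)
          ((hζC.mono hsubxy).mul hwC.continuousOn)
          (f' := fun s => (-(s / (1 + s ^ 2)) * ((1 + ζ s) / (1 / ((d:ℝ) + 1) + ζ s)) * ζ s)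
            * (1 + s ^ 2) ^ (((d:ℝ) + 1) / 2)
            + ζ s * (2 * (((d:ℝ) + 1) / 2) * (s / (1 + s ^ 2))
              * (1 + s ^ 2) ^ (((d:ℝ) + 1) / 2))) ?_ ?_
        · simp only [interior_Icc]
          intro s hs
          exact ((hode s (le_trans hxt₀ hs.1.le)).mono
            (fun u hu => le_trans hxt₀ hu.1.le)).mul
            (wderiv (((d:ℝ) + 1) / 2) s).hasDerivWithinAt
        · simp only [interior_Icc]
          intro s hs
          obtain ⟨haz, h1z, hc0, hc1, hsneg, hsb⟩ := hfacts s hs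
          have hFd : (d:ℝ) + 1 ≤ (1 + ζ s) / (1 / ((d:ℝ) + 1) + ζ s) := by
            rw [le_div_iff₀ haz]
            have hA : ((d:ℝ) + 1) * (1 / ((d:ℝ) + 1)) = 1 := by field_simp
            nlinarith [hA, mul_nonneg (by linarith : (0:ℝ) ≤ (d:ℝ))
              (by linarith : (0:ℝ) ≤ -ζ s)]
          have heq : (-(s / (1 + s ^ 2)) * ((1 + ζ s) / (1 / ((d:ℝ) + 1) + ζ s)) * ζ s)
              * (1 + s ^ 2) ^ (((d:ℝ) + 1) / 2)
              + ζ s * (2 * (((d:ℝ) + 1) / 2) * (s / (1 + s ^ 2))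
                * (1 + s ^ 2) ^ (((d:ℝ) + 1) / 2))
              = (1 + s ^ 2) ^ (((d:ℝ) + 1) / 2) * ((s / (1 + s ^ 2)) * (-ζ s)
                * ((1 + ζ s) / (1 / ((d:ℝ) + 1) + ζ s) - ((d:ℝ) + 1))) := by ring
          rw [heq]
          exact mul_nonneg (hwpos s).le
            (mul_nonneg (mul_nonneg hc0 (by linarith)) (by linarith))
      -- conclude: y works
      have hxx : x ∈ Set.Icc x y := ⟨le_refl x, hxy.le⟩
      have hyy : y ∈ Set.Icc x y := ⟨hxy.le, le_refl y⟩
      refine ⟨y, ⟨?_, ?_, ?_⟩, hxy, min_le_right _ _⟩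
      · exact le_trans hx1 (hmonoζ hxx hyy hxy.le)
      · exact le_trans (hantih hxx hyy hxy.le) hx2
      · exact le_trans hx3 (hmonog hxx hyy hxy.le)
  -- assemble the final bound
  refine ⟨-(ζ t₀ * (1 + t₀ ^ 2) ^ (((d:ℝ) + 1) / 2)), ?_⟩
  intro t ht
  obtain ⟨h1, h2, h3⟩ := key t ⟨ht, le_refl t⟩
  have hζt_neg : ζ t < 0 := by
    by_contra h
    push_neg at h
    nlinarith [mul_nonneg h (Real.exp_pos (L * t)).le,
      mul_neg_of_neg_of_pos hz₂ (Real.exp_pos (L * t₀))]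
  rw [abs_of_neg hζt_neg]
  rw [show -((d:ℝ) + 1) / 2 = -(((d:ℝ) + 1) / 2) from by ring,
    Real.rpow_neg (by positivity : (0:ℝ) ≤ 1 + t ^ 2), ← div_eq_mul_inv,
    le_div_iff₀ (hwpos t)]
  linarith [h3]
end
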